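/- arXiv:1905.11281 — 8 statements merged into one kernel-verified Lean document; each statement's English description precedes it below -/
import Mathlib

section
/- Every nonempty word over a totally ordered alphabet can be written uniquely as a nonincreasing product of Lyndon words, i.e. w = l₁ l₂ ⋯ l_s with each lᵢ a Lyndon word and l₁ ≥ l₂ ≥ ⋯ ≥ l_s in the lexicographic order. -/
/-- A Lyndon word: a nonempty word strictly lexicographically smaller than
all of its proper cyclic rotations. -/
def IsLyndon {X : Type*} [LinearOrder X] (w : List X) : Prop :=
  w ≠ [] ∧ ∀ a b : List X, a ≠ [] → b ≠ [] → w = a ++ b →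
    List.Lex (· < ·) w (b ++ a)

section Lyndon
variable {X : Type*} [LinearOrder X]

theorem lyndon_lt_append_right (l : List X) {c : List X} (hc : c ≠ []) : l < l ++ c := by
  show List.Lex (· < ·) l (l ++ c)
  induction l with
  | nil =>
    cases c with
    | nil => exact absurd rfl hc
    | cons x xs => exact List.Lex.nil
  | cons x xs ih => exact List.Lex.cons ih

theorem lyndon_prefix_le {a b : List X} (h : a <+: b) : a ≤ b := by
  obtain ⟨c, rfl⟩ := h
  rcases eq_or_ne c [] with rfl | hc
  · simp
  · exact le_of_lt (lyndon_lt_append_right a hc)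

theorem lyndon_not_prefix_of_length_lt {a b : List X} (h : b.length < a.length) :
    ¬ a <+: b := fun hp => absurd hp.length_le (by omega)

theorem lyndon_lt_of_append_left : ∀ (s : List X) {t₁ t₂ : List X},
    s ++ t₁ < s ++ t₂ → t₁ < t₂ := by
  intro s
  induction s with
  | nil => intro t₁ t₂ h; exact h
  | cons x xs ih =>
    intro t₁ t₂ h
    have h' : List.Lex (· < ·) (x :: (xs ++ t₁)) (x :: (xs ++ t₂)) := h
    cases h' with
    | cons h'' => exact ih h''
    | rel h'' => exact absurd h'' (lt_irrefl x)

theorem lyndon_lt_append_of_not_prefix : ∀ {u v : List X}, u < v → ¬ u <+: v →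
    ∀ (x y : List X), u ++ x < v ++ y := by
  intro u
  induction u with
  | nil => intro v _ hp _ _; exact absurd (List.nil_prefix) hp
  | cons a u' ih =>
    intro v hlt hp x y
    cases v with
    | nil => exact absurd hlt (by intro h; cases h)
    | cons b v' =>
      have h' : List.Lex (· < ·) (a :: u') (b :: v') := hlt
      cases h' with
      | rel h'' => exact List.Lex.rel h''
      | cons h'' =>
        have hnp : ¬ u' <+: v' := fun hq => hp ((List.cons_prefix_cons).mpr ⟨rfl, hq⟩)
        exact List.Lex.cons (ih h'' hnp x y)

theorem IsLyndon.lt_suffix {w a b : List X} (hw : IsLyndon w) (ha : a ≠ []) (hb : b ≠ [])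
    (hab : w = a ++ b) : w < b := by
  have hrot : w < b ++ a := hw.2 a b ha hb hab
  have hlenb : b.length < w.length := by
    have := congrArg List.length hab
    simp only [List.length_append] at this
    have ha' : 0 < a.length := List.length_pos_iff.mpr ha
    omega
  rcases lt_trichotomy w b with h | h | h
  · exact h
  · exfalso; rw [h] at hlenb; omega
  · exfalso
    by_cases hpre : b <+: w
    · obtain ⟨t, hbt⟩ := hpre
      have ht : t ≠ [] := by
        rintro rfl
        rw [List.append_nil] at hbt
        rw [hbt] at hlenb; omega
      have hrot2 : w < t ++ b := hw.2 b t hb ht hbt.symm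
      have hta : t < a := by
        have h1 : b ++ t < b ++ a := by rw [hbt]; exact hrot
        exact lyndon_lt_of_append_left b h1
      have hlen_ta : t.length = a.length := by
        have h1 := congrArg List.length hab
        have h2 := congrArg List.length hbt
        simp only [List.length_append] at h1 h2
        omega
      have hnp : ¬ t <+: a := by
        intro hp
        obtain ⟨c, hc⟩ := hp
        have := congrArg List.length hc
        simp only [List.length_append] at this
        have hc0 : c = [] := List.length_eq_zero_iff.mp (by omega)
        subst hc0
        rw [List.append_nil] at hc
        rw [← hc] at hta
        exact absurd hta (lt_irrefl t)
      have h2 : t ++ b < a ++ b := lyndon_lt_append_of_not_prefix hta hnp b b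
      rw [← hab] at h2
      exact absurd (lt_trans hrot2 h2) (lt_irrefl w)
    · have h2 : b ++ a < w ++ [] := lyndon_lt_append_of_not_prefix h hpre a []
      rw [List.append_nil] at h2
      exact absurd (lt_trans hrot h2) (lt_irrefl w)

theorem isLyndon_of_lt_suffix {w : List X} (hne : w ≠ [])
    (h : ∀ a b : List X, a ≠ [] → b ≠ [] → w = a ++ b → w < b) : IsLyndon w := by
  refine ⟨hne, fun a b ha hb hab => ?_⟩
  have hwb := h a b ha hb hab
  have hnp : ¬ w <+: b := by
    apply lyndon_not_prefix_of_length_lt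
    have := congrArg List.length hab
    simp only [List.length_append] at this
    have ha' : 0 < a.length := List.length_pos_iff.mpr ha
    omega
  have := lyndon_lt_append_of_not_prefix hwb hnp [] a
  rw [List.append_nil] at this
  exact this

theorem lyndon_uv_lt_v {u v : List X} (hu : IsLyndon u) (hv : IsLyndon v) (huv : u < v) :
    u ++ v < v := by
  by_cases hp : u <+: v
  · obtain ⟨z, rfl⟩ := hp
    have hz : z ≠ [] := by
      rintro rfl
      rw [List.append_nil] at huv
      exact absurd huv (lt_irrefl u)
    have hvz : u ++ z < z := hv.lt_suffix hu.1 hz rfl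
    show List.Lex (· < ·) (u ++ (u ++ z)) (u ++ z)
    exact List.Lex.append_left _ hvz u
  · have := lyndon_lt_append_of_not_prefix huv hp v []
    rwa [List.append_nil] at this

theorem IsLyndon.append {u v : List X} (hu : IsLyndon u) (hv : IsLyndon v) (huv : u < v) :
    IsLyndon (u ++ v) := by
  apply isLyndon_of_lt_suffix (by simp [hu.1])
  intro a b ha hb hab
  rcases List.append_eq_append_iff.mp hab.symm with ⟨c, hc1, hc2⟩ | ⟨c, hc1, hc2⟩
  · -- u = a ++ c, b = c ++ v  (split inside u or at boundary)
    rcases eq_or_ne c [] with rfl | hc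
    · rw [List.append_nil] at hc1
      rw [hc2]; simp only [List.nil_append]
      exact lyndon_uv_lt_v hu hv huv
    · have huc : u < c := hu.lt_suffix ha hc hc1
      have hnp : ¬ u <+: c := by
        apply lyndon_not_prefix_of_length_lt
        have := congrArg List.length hc1
        simp only [List.length_append] at this
        have ha' : 0 < a.length := List.length_pos_iff.mpr ha
        omega
      have := lyndon_lt_append_of_not_prefix huc hnp v v
      rwa [← hc2] at this
  · -- a = u ++ c, v = c ++ b
    rcases eq_or_ne c [] with rfl | hc
    · simp only [List.nil_append] at hc2
      rw [← hc2]
      exact lyndon_uv_lt_v hu hv huv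
    · have hvb : v < b := hv.lt_suffix hc hb hc2
      exact lt_trans (lyndon_uv_lt_v hu hv huv) hvb

theorem isLyndon_singleton (x : X) : IsLyndon [x] := by
  refine ⟨by simp, fun a b ha hb hab => ?_⟩
  exfalso
  have := congrArg List.length hab
  simp only [List.length_append, List.length_cons, List.length_nil] at this
  have ha' : 0 < a.length := List.length_pos_iff.mpr ha
  have hb' : 0 < b.length := List.length_pos_iff.mpr hb
  omega

theorem lyndon_not_chain'_decomp {α : Type*} {R : α → α → Prop} :
    ∀ {l : List α}, ¬ l.Chain' R →
    ∃ p a b q, l = p ++ a :: b :: q ∧ ¬ R a b := by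
  intro l
  induction l with
  | nil => intro h; exact absurd List.isChain_nil h
  | cons a t ih =>
    intro h
    cases t with
    | nil => exact absurd (List.isChain_singleton a) h
    | cons b q =>
      unfold List.Chain' at h; rw [List.isChain_cons_cons] at h
      by_cases hr : R a b
      · have ht : ¬ (b :: q).Chain' R := fun hc => h ⟨hr, hc⟩
        obtain ⟨p, x, y, q', heq, hxy⟩ := ih ht
        exact ⟨a :: p, x, y, q', by rw [heq]; rfl, hxy⟩
      · exact ⟨[], a, b, q, rfl, hr⟩

theorem lyndon_exists_chain : ∀ (n : ℕ) (ls : List (List X)), ls.length ≤ n →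
    (∀ l ∈ ls, IsLyndon l) →
    ∃ ms : List (List X), (∀ l ∈ ms, IsLyndon l) ∧
      ms.Chain' (fun a b => ¬ a < b) ∧ ms.flatten = ls.flatten := by
  intro n
  induction n with
  | zero =>
    intro ls h _
    have : ls = [] := List.eq_nil_of_length_eq_zero (by omega)
    subst this
    exact ⟨[], by simp, List.isChain_nil, rfl⟩
  | succ n ih =>
    intro ls hlen hly
    by_cases hc : ls.Chain' (fun a b => ¬ a < b)
    · exact ⟨ls, hly, hc, rfl⟩
    · obtain ⟨p, a, b, q, rfl, hab⟩ := lyndon_not_chain'_decomp hc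
      have hab' : a < b := not_not.mp hab
      have hla : IsLyndon a := hly a (by simp)
      have hlb : IsLyndon b := hly b (by simp)
      have hmerge : IsLyndon (a ++ b) := hla.append hlb hab'
      have hlen' : (p ++ (a ++ b) :: q).length ≤ n := by
        simp only [List.length_append, List.length_cons] at hlen ⊢
        omega
      have hly' : ∀ l ∈ p ++ (a ++ b) :: q, IsLyndon l := by
        intro l hl
        simp only [List.mem_append, List.mem_cons] at hl
        rcases hl with h1 | h1 | h1
        · exact hly l (by simp [h1])
        · rw [h1]; exact hmerge
        · exact hly l (by simp [h1])
      obtain ⟨ms, h1, h2, h3⟩ := ih (p ++ (a ++ b) :: q) hlen' hly'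
      refine ⟨ms, h1, h2, ?_⟩
      rw [h3]
      simp [List.flatten_append, List.append_assoc]

theorem lyndon_prefix_decomp : ∀ (ms : List (List X)), (∀ m ∈ ms, m ≠ []) →
    ∀ v : List X, v <+: ms.flatten → v ≠ [] →
    ∃ (j : ℕ) (a : List X) (h : j < ms.length),
      v = (ms.take j).flatten ++ a ∧ a ≠ [] ∧ a <+: ms.get ⟨j, h⟩ := by
  intro ms
  induction ms with
  | nil =>
    intro _ v hp hv
    rw [List.flatten_nil, List.prefix_nil] at hp
    exact absurd hp hv
  | cons m t ih =>
    intro hne v hp hv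
    rw [List.flatten_cons] at hp
    by_cases hvm : v <+: m
    · exact ⟨0, v, by simp, by simp, hv, hvm⟩
    · have hmv : m <+: v := by
        rcases List.prefix_or_prefix_of_prefix hp (List.prefix_append m t.flatten) with h | h
        · exact absurd h hvm
        · exact h
      obtain ⟨v', rfl⟩ := hmv
      have hv' : v' ≠ [] := by
        rintro rfl
        rw [List.append_nil] at hvm
        exact hvm (List.prefix_refl m)
      have hp' : v' <+: t.flatten := by
        obtain ⟨c, hc⟩ := hp
        rw [List.append_assoc] at hc
        exact ⟨c, List.append_cancel_left hc⟩
      obtain ⟨j, a, hj, heq, hane, hpa⟩ := ih (fun x hx => hne x (by simp [hx])) v' hp' hv'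
      refine ⟨j + 1, a, by simp; omega, ?_, hane, ?_⟩
      · rw [List.take_succ_cons, List.flatten_cons, List.append_assoc, heq]
      · exact hpa

theorem lyndon_key_not_lt {l m : List X} {ls ms : List (List X)}
    (hl : ∀ x ∈ l :: ls, IsLyndon x) (hm : ∀ x ∈ m :: ms, IsLyndon x)
    (hcm : (m :: ms).Chain' (fun a b => ¬ a < b))
    (hflat : (l :: ls).flatten = (m :: ms).flatten) :
    ¬ m.length < l.length := by
  intro hlen
  have hlne : l ≠ [] := (hl l (by simp)).1
  have hmne : m ≠ [] := (hm m (by simp)).1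
  have hlpre : l <+: (m :: ms).flatten := ⟨ls.flatten, by rw [← hflat]; rfl⟩
  obtain ⟨j, a, hj, heq, hane, hpa⟩ :=
    lyndon_prefix_decomp (m :: ms) (fun x hx => (hm x hx).1) l hlpre hlne
  match j, hj, heq, hpa with
  | 0, hj, heq, hpa =>
    simp only [List.take_zero, List.flatten_nil, List.nil_append] at heq
    subst heq
    have hg : (m :: ms).get ⟨0, hj⟩ = m := rfl
    rw [hg] at hpa
    exact absurd hpa.length_le (by omega)
  | j + 1, hj, heq, hpa =>
    have hpne : (((m :: ms).take (j + 1)).flatten : List X) ≠ [] := by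
      rw [List.take_succ_cons, List.flatten_cons]
      simp [hmne]
    have hla : l < a := (hl l (by simp)).lt_suffix hpne hane heq
    have h1 : a ≤ (m :: ms).get ⟨j + 1, hj⟩ := lyndon_prefix_le hpa
    have hgetmem : (m :: ms).get ⟨j + 1, hj⟩ ∈ ms := by
      have : (m :: ms).get ⟨j + 1, hj⟩ = ms.get ⟨j, by simpa using hj⟩ := rfl
      rw [this]
      exact List.get_mem ms _
    haveI : IsTrans (List X) (fun a b : List X => ¬ a < b) :=
      ⟨fun a b c h1 h2 => by rw [not_lt] at *; exact le_trans h2 h1⟩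
    have hpw : (m :: ms).Pairwise (fun a b : List X => ¬ a < b) :=
      List.isChain_iff_pairwise.mp hcm
    have h2 : (m :: ms).get ⟨j + 1, hj⟩ ≤ m := by
      have := (List.pairwise_cons.mp hpw).1 _ hgetmem
      exact not_lt.mp this
    have h3 : m < l := by
      have : m <+: l := by
        refine ⟨(ms.take j).flatten ++ a, ?_⟩
        rw [heq, List.take_succ_cons, List.flatten_cons, List.append_assoc]
      obtain ⟨c, hc⟩ := this
      have hcne : c ≠ [] := by
        rintro rfl
        rw [List.append_nil] at hc
        rw [← hc] at hlen; omega
      rw [← hc]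
      exact lyndon_lt_append_right m hcne
    exact absurd (lt_trans h3 (lt_of_lt_of_le (lt_of_lt_of_le hla h1) h2)) (lt_irrefl m)

theorem lyndon_unique_chain : ∀ (ls ms : List (List X)),
    (∀ x ∈ ls, IsLyndon x) → ls.Chain' (fun a b => ¬ a < b) →
    (∀ x ∈ ms, IsLyndon x) → ms.Chain' (fun a b => ¬ a < b) →
    ls.flatten = ms.flatten → ls = ms := by
  intro ls
  induction ls with
  | nil =>
    intro ms _ _ hm _ hf
    cases ms with
    | nil => rfl
    | cons m t =>
      exfalso
      have hmne : m ≠ [] := (hm m (by simp)).1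
      rw [List.flatten_nil, List.flatten_cons] at hf
      exact hmne (List.append_eq_nil_iff.mp hf.symm).1
  | cons l ls ih =>
    intro ms hl hcl hm hcm hf
    cases ms with
    | nil =>
      exfalso
      have hlne : l ≠ [] := (hl l (by simp)).1
      rw [List.flatten_nil, List.flatten_cons] at hf
      exact hlne (List.append_eq_nil_iff.mp hf).1
    | cons m mt =>
      have h1 := lyndon_key_not_lt hl hm hcm hf
      have h2 := lyndon_key_not_lt hm hl hcl hf.symm
      have hlen : l.length = m.length := by omega
      rw [List.flatten_cons, List.flatten_cons] at hf
      obtain ⟨heq, hff⟩ := List.append_inj hf hlen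
      subst heq
      have htail : ls = mt :=
        ih mt (fun x hx => hl x (List.mem_cons_of_mem _ hx)) hcl.tail
          (fun x hx => hm x (List.mem_cons_of_mem _ hx)) hcm.tail hff
      rw [htail]

end Lyndon

theorem stmt1 {X : Type*} [LinearOrder X] (w : List X) (hw : w ≠ []) :
    ∃! ls : List (List X),
      (∀ l ∈ ls, IsLyndon l) ∧
      ls.Chain' (fun a b => ¬ List.Lex (· < ·) a b) ∧
      ls.flatten = w := by
  obtain ⟨ms, hly, hch, hfl⟩ := lyndon_exists_chain (w.length) (w.map fun x => [x])
    (by simp) (by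
      intro l hl
      simp only [List.mem_map] at hl
      obtain ⟨x, _, rfl⟩ := hl
      exact isLyndon_singleton x)
  have hsing : ∀ u : List X, (List.map (fun x => [x]) u).flatten = u := by
    intro u
    induction u with
    | nil => rfl
    | cons x xs ihw => simp [ihw]
  have hflw : ms.flatten = w := by rw [hfl, hsing]
  refine ⟨ms, ⟨hly, hch, hflw⟩, ?_⟩
  rintro ls ⟨h1, h2, h3⟩
  exact lyndon_unique_chain ls ms h1 h2 hly hch (by rw [h3, hflw])
end

section
/- If uv and vw are Lyndon words with v nonempty (and u, w arbitrary words such that uv and vw are nonempty), then uvw is a Lyndon word. -/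
namespace LyndonAux

variable {X : Type*} [LinearOrder X]

/-- Transitivity of the lexicographic order. -/
theorem lexTrans : ∀ {x y z : List X},
    List.Lex (· < ·) x y → List.Lex (· < ·) y z → List.Lex (· < ·) x z
  | _, _, _, List.Lex.nil, List.Lex.cons _ => List.Lex.nil
  | _, _, _, List.Lex.nil, List.Lex.rel _ => List.Lex.nil
  | _, _, _, List.Lex.cons h, List.Lex.cons h' => List.Lex.cons (lexTrans h h')
  | _, _, _, List.Lex.cons _, List.Lex.rel r => List.Lex.rel r
  | _, _, _, List.Lex.rel r, List.Lex.cons _ => List.Lex.rel r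
  | _, _, _, List.Lex.rel r, List.Lex.rel r' => List.Lex.rel (lt_trans r r')

theorem lexAsymm {x y : List X} (h : List.Lex (· < ·) x y) (h' : List.Lex (· < ·) y x) : False :=
  (List.Lex.asymm (· < · : X → X → Prop)).asymm _ _ h h'

/-- If `x < y` and `y` is not longer than `x`, then `x ++ c < y`. -/
theorem lexExtLeft : ∀ {x y : List X} (c : List X),
    List.Lex (· < ·) x y → y.length ≤ x.length → List.Lex (· < ·) (x ++ c) y
  | _, _, _, List.Lex.nil, hl => by simp at hl
  | _, _, c, List.Lex.cons h, hl =>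
      List.Lex.cons (lexExtLeft c h (Nat.le_of_succ_le_succ hl))
  | _, _, _, List.Lex.rel r, _ => List.Lex.rel r

/-- If `x < y` and `x` is not a prefix of `y`, then `x ++ c < y`. -/
theorem lexExtLeft' : ∀ {x y : List X} (c : List X),
    List.Lex (· < ·) x y → ¬ x <+: y → List.Lex (· < ·) (x ++ c) y
  | _, _, _, List.Lex.nil, hp => absurd (List.nil_prefix) hp
  | _, _, c, List.Lex.cons h, hp => by
      refine List.Lex.cons (lexExtLeft' c h fun hpre => hp ?_)
      exact List.cons_prefix_cons.mpr ⟨rfl, hpre⟩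
  | _, _, _, List.Lex.rel r, _ => List.Lex.rel r

/-- Cancel a common left factor in a lexicographic comparison. -/
theorem lexCancelLeft : ∀ (p : List X) {x y : List X},
    List.Lex (· < ·) (p ++ x) (p ++ y) → List.Lex (· < ·) x y
  | [], _, _, h => h
  | a :: p, x, y, h => by
      have := List.lex_cons_iff.mp (by simpa only [List.cons_append] using h)
      exact lexCancelLeft p this

/-- A Lyndon word is smaller than each of its proper nonempty suffixes. -/
theorem lyndon_lt_suffix {x a s : List X} (hL : IsLyndon x) (hx : x = a ++ s)
    (ha : a ≠ []) (hs : s ≠ []) : List.Lex (· < ·) x s := by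
  have hrot : List.Lex (· < ·) x (s ++ a) := hL.2 a s ha hs hx
  have hlen : s.length < x.length := by
    subst hx
    simp only [List.length_append]
    have := List.length_pos_iff.mpr ha
    omega
  rcases trichotomous_of (List.Lex (· < · : X → X → Prop)) x s with h | h | h
  · exact h
  · subst h; omega
  · exfalso
    by_cases hpre : s <+: x
    · obtain ⟨r, hr⟩ := hpre
      have hrne : r ≠ [] := by
        intro h0
        rw [h0, List.append_nil] at hr
        rw [hr] at hlen
        exact lt_irrefl _ hlen
      have hrot2 : List.Lex (· < ·) x (r ++ s) := hL.2 s r hs hrne hr.symm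
      have hcan : List.Lex (· < ·) r a := by
        apply lexCancelLeft s
        rw [← hr] at hrot
        exact hrot
      have hlen2 : a.length ≤ r.length := by
        have : (a ++ s).length = (s ++ r).length := by rw [← hx, hr]
        simp only [List.length_append] at this
        omega
      have : List.Lex (· < ·) (r ++ s) x := by
        rw [hx]
        exact List.Lex.append_right _ s (lexExtLeft s hcan hlen2)
      exact lexAsymm hrot2 this
    · exact lexAsymm hrot (lexExtLeft' a h hpre)

end LyndonAux

theorem stmt4 {X : Type*} [LinearOrder X] (u v w : List X) (hv : v ≠ [])
    (h1 : IsLyndon (u ++ v)) (h2 : IsLyndon (v ++ w)) :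
    IsLyndon (u ++ v ++ w) := by
  open LyndonAux in
  constructor
  · simp [hv]
  · intro a b ha hb heq
    rcases le_or_gt b.length w.length with hbw | hbw
    · -- b is a suffix of w
      have hbsuf : b <:+ w := by
        refine List.suffix_of_suffix_length_le ⟨a, heq.symm⟩ ?_ hbw
        exact ⟨u ++ v, by simp⟩
      obtain ⟨t, ht⟩ := hbsuf
      -- v ++ w = (v ++ t) ++ b
      have hvw : v ++ w = (v ++ t) ++ b := by rw [← ht, List.append_assoc]
      have hvwb : List.Lex (· < ·) (v ++ w) b :=
        lyndon_lt_suffix h2 hvw (by simp [hv]) hb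
      have hxb : List.Lex (· < ·) (u ++ v ++ w) b := by
        rcases eq_or_ne u [] with rfl | hu
        · simpa using hvwb
        · have huv : List.Lex (· < ·) (u ++ v) v :=
            lyndon_lt_suffix h1 rfl hu hv
          have hxv : List.Lex (· < ·) ((u ++ v) ++ w) v :=
            lexExtLeft w huv (by simp)
          have hxvw : List.Lex (· < ·) (u ++ v ++ w) (v ++ w) :=
            List.Lex.append_right _ w hxv
          exact lexTrans hxvw hvwb
      exact List.Lex.append_right _ a hxb
    · -- a is a proper prefix of u ++ v
      have halen : a.length < (u ++ v).length := by
        have : (u ++ v ++ w).length = (a ++ b).length := by rw [heq]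
        simp only [List.length_append] at this ⊢
        omega
      have hapre : a <+: u ++ v := by
        refine List.prefix_of_prefix_length_le ⟨b, heq.symm⟩ ?_ (le_of_lt halen)
        exact ⟨w, by simp⟩
      obtain ⟨s, hs⟩ := hapre
      have hsne : s ≠ [] := by
        intro h0
        rw [h0, List.append_nil] at hs
        rw [← hs] at halen
        exact lt_irrefl _ halen
      have hbsw : b = s ++ w := by
        have : a ++ (s ++ w) = a ++ b := by
          rw [← List.append_assoc, hs, heq]
        exact (List.append_cancel_left this).symm
      have huvs : List.Lex (· < ·) (u ++ v) s :=
        lyndon_lt_suffix h1 hs.symm ha hsne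
      have hslen : s.length ≤ (u ++ v).length := le_of_lt (by
        rw [← hs]; simp only [List.length_append]
        have := List.length_pos_iff.mpr ha
        omega)
      have hxs : List.Lex (· < ·) ((u ++ v) ++ w) s := lexExtLeft w huvs hslen
      have : List.Lex (· < ·) (u ++ v ++ w) (s ++ (w ++ a)) :=
        List.Lex.append_right _ (w ++ a) hxs
      simpa [hbsw, List.append_assoc] using this
end

section
/- If a and b are Lyndon words that overlap, meaning a = uv and b = vw with v nonempty and uw nonempty, then a < b in the lexicographic order. -/
/-!
If `u = []` then `u ++ v = v` is a proper prefix of `v ++ w`. Otherwise `v` is a proper suffix of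
the Lyndon word `u ++ v`, and a Lyndon word is smaller than each of its proper suffixes; as
`u ++ v < v` is then witnessed inside `v`, it persists when `v` is extended to `v ++ w`.
The suffix property follows from comparing `p ++ s` with its rotations `s ++ p` and, when `s` is
a prefix of `p ++ s = s ++ t`, `t ++ s`.
-/

namespace List.Lex

variable {α : Type*} {r : α → α → Prop}

theorem lex_or_eq_append_of_lex_append {x y z : List α} (h : Lex r x (y ++ z)) :
    Lex r x y ∨ ∃ t, x = y ++ t ∧ Lex r t z := by
  induction y generalizing x with
  | nil => exact .inr ⟨x, rfl, h⟩
  | cons a y ih =>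
    cases h with
    | nil => exact .inl .nil
    | rel hab => exact .inl (.rel hab)
    | cons h =>
      rcases ih h with h' | ⟨t, rfl, ht⟩
      · exact .inl (.cons h')
      · exact .inr ⟨t, rfl, ht⟩

theorem append_of_length_eq {p t : List α} (h : Lex r p t) (hlen : p.length = t.length)
    (s s' : List α) : Lex r (p ++ s) (t ++ s') := by
  induction h with
  | nil => simp at hlen
  | rel hab => exact .rel hab
  | cons _ ih => exact .cons (ih (by simpa using hlen))

end List.Lex

theorem IsLyndon.lex_suffix {X : Type*} [LinearOrder X] {p s : List X} (h : IsLyndon (p ++ s))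
    (hp : p ≠ []) (hs : s ≠ []) : List.Lex (· < ·) (p ++ s) s := by
  refine (h.2 p s hp hs rfl).lex_or_eq_append_of_lex_append.resolve_right ?_
  rintro ⟨t, heq, htp⟩
  have hlen : t.length = p.length := by
    have := congrArg List.length heq
    simp only [List.length_append] at this
    omega
  have ht : t ≠ [] := by
    rw [← List.length_pos_iff] at hp ⊢
    omega
  have hpt : List.Lex (· < ·) (p ++ s) (t ++ s) := h.2 s t hs ht heq
  exact List.lex_asymm (fun hxy hyx => lt_asymm hxy hyx) hpt (htp.append_of_length_eq hlen s s)

theorem stmt5_general {X : Type*} [LinearOrder X] (u v w : List X) (hv : v ≠ [])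
    (huw : u ++ w ≠ []) (h1 : IsLyndon (u ++ v)) :
    List.Lex (· < ·) (u ++ v) (v ++ w) := by
  rcases eq_or_ne u [] with rfl | hu
  · rw [List.nil_append] at huw ⊢
    simpa only [List.append_nil] using ((List.lex_nil_or_eq_nil w).resolve_right huw).append_left _ v
  · exact (h1.lex_suffix hu hv).append_right _ w

theorem stmt5 {X : Type*} [LinearOrder X] (u v w : List X) (hv : v ≠ [])
    (huw : u ++ w ≠ []) (h1 : IsLyndon (u ++ v)) (h2 : IsLyndon (v ++ w)) :
    List.Lex (· < ·) (u ++ v) (v ++ w) :=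
  stmt5_general u v w hv huw h1
end

section
/- Let a < b be Lyndon words. Then a^k b^l is a Lyndon word for all integers k, l ≥ 1. -/
section Aux

variable {X : Type*} [LinearOrder X]

private lemma lex_append_right {x y : List X} (h : List.Lex (· < ·) x y) (t : List X) :
    List.Lex (· < ·) x (y ++ t) := by
  induction h with
  | nil => exact List.Lex.nil
  | rel h => exact List.Lex.rel h
  | cons _ ih => exact List.Lex.cons ih

private lemma lex_append_self {x t : List X} (ht : t ≠ []) :
    List.Lex (· < ·) x (x ++ t) := by
  induction x with
  | nil =>
    cases t with
    | nil => exact absurd rfl ht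
    | cons c cs => exact List.Lex.nil
  | cons c cs ih => exact List.Lex.cons ih

private lemma lex_append_left_iff (x u v : List X) :
    List.Lex (· < ·) (x ++ u) (x ++ v) ↔ List.Lex (· < ·) u v := by
  induction x with
  | nil => simp
  | cons c cs ih => simpa [List.lex_cons_iff] using ih

private lemma lex_append_of_not_prefix :
    ∀ {x y : List X}, List.Lex (· < ·) x y → ¬ x <+: y → ∀ s t : List X,
      List.Lex (· < ·) (x ++ s) (y ++ t)
  | _, _, List.Lex.nil, hp, s, t => absurd (List.nil_prefix) hp
  | _, _, List.Lex.rel h, _, s, t => List.Lex.rel h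
  | _, _, @List.Lex.cons _ _ a x y h, hp, s, t =>
    List.Lex.cons (lex_append_of_not_prefix h
      (fun hpp => hp (List.cons_prefix_cons.mpr ⟨rfl, hpp⟩)) s t)

private lemma lex_append_case :
    ∀ {y x t : List X}, List.Lex (· < ·) x (y ++ t) →
      List.Lex (· < ·) x y ∨ y <+: x
  | [], x, t, _ => Or.inr (List.nil_prefix)
  | c :: ys, [], t, _ => Or.inl List.Lex.nil
  | c :: ys, a :: xs, t, h => by
    cases h with
    | rel h => exact Or.inl (List.Lex.rel h)
    | cons h =>
      rcases lex_append_case h with h' | h'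
      · exact Or.inl (List.Lex.cons h')
      · exact Or.inr (List.cons_prefix_cons.mpr ⟨rfl, h'⟩)

/-- A Lyndon word is smaller than each of its proper nonempty suffixes. -/
private lemma lyndon_lt_suffix {w : List X} (hw : IsLyndon w) :
    ∀ p s : List X, p ≠ [] → s ≠ [] → w = p ++ s → List.Lex (· < ·) w s := by
  intro p s hp hs he
  rcases lex_append_case (hw.2 p s hp hs he) with h | h
  · exact h
  -- bad case: s is also a prefix of w; derive a contradiction (borders)
  obtain ⟨q, hq⟩ := h
  have hq' : q ≠ [] := by
    rintro rfl
    have : w = s := by simpa using hq.symm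
    subst this
    have := congrArg List.length he
    simp at this
    exact hp this
  have h1 : List.Lex (· < ·) w (q ++ s) := hw.2 s q hs hq' hq.symm
  have h2 : List.Lex (· < ·) q p := by
    have : List.Lex (· < ·) (s ++ q) (s ++ p) := by
      rw [hq]; exact hw.2 p s hp hs he
    exact (lex_append_left_iff s q p).mp this
  have hlen : q.length = p.length := by
    have e1 := congrArg List.length he
    have e2 := congrArg List.length hq
    simp at e1 e2
    omega
  have hnp : ¬ q <+: p := by
    intro hpre
    have : q = p := List.IsPrefix.eq_of_length hpre hlen
    subst this
    exact irrefl_of (List.Lex (· < ·)) q h2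
  have h3 : List.Lex (· < ·) (q ++ s) (p ++ s) := lex_append_of_not_prefix h2 hnp s s
  rw [← he] at h3
  exact absurd h3 (asymm_of (List.Lex (· < ·)) h1)

private lemma lyndon_of_suffix {w : List X} (hw : w ≠ [])
    (h : ∀ p s : List X, p ≠ [] → s ≠ [] → w = p ++ s → List.Lex (· < ·) w s) :
    IsLyndon w :=
  ⟨hw, fun p s hp hs he => lex_append_right (h p s hp hs he) p⟩

private lemma core_lt {u v : List X} (hune : u ≠ []) (hv : IsLyndon v)
    (huv : List.Lex (· < ·) u v) :
    List.Lex (· < ·) (u ++ v) v := by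
  by_cases hp : u <+: v
  · obtain ⟨t, ht⟩ := hp
    have hv_eq : v = u ++ t := ht.symm
    have htne : t ≠ [] := by
      rintro rfl
      rw [List.append_nil] at hv_eq
      rw [hv_eq] at huv
      exact irrefl_of (List.Lex (· < ·)) u huv
    have hvt : List.Lex (· < ·) v t := lyndon_lt_suffix hv u t hune htne hv_eq
    conv_rhs => rw [hv_eq]
    exact (lex_append_left_iff u v t).mpr hvt
  · have := lex_append_of_not_prefix huv hp v []
    simpa using this

private lemma core {u v : List X} (hu : IsLyndon u) (hv : IsLyndon v)
    (huv : List.Lex (· < ·) u v) : IsLyndon (u ++ v) := by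
  have hltv : List.Lex (· < ·) (u ++ v) v := core_lt hu.1 hv huv
  refine lyndon_of_suffix (by simp [hu.1]) ?_
  intro p s hp hs he
  rcases List.append_eq_append_iff.mp he with ⟨t, htp, htv⟩ | ⟨t, htu, hts⟩
  ·
    -- here p = u ++ t and v = t ++ s
    by_cases htne : t = []
    · subst htne
      simp at htv
      subst htv
      exact hltv
    · have : List.Lex (· < ·) v s := lyndon_lt_suffix hv t s htne hs htv
      exact List.lt_trans hltv this
  · -- u = p ++ t and s = t ++ v
    by_cases htne : t = []
    · subst htne
      simp at hts
      subst hts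
      exact hltv
    · have h1 : List.Lex (· < ·) u t := lyndon_lt_suffix hu p t hp htne htu
      have hnp : ¬ u <+: t := by
        intro hpre
        have l1 := List.IsPrefix.length_le hpre
        have l2 := congrArg List.length htu
        simp at l2
        have : p.length = 0 := by omega
        exact hp (List.length_eq_zero_iff.mp this)
      have := lex_append_of_not_prefix h1 hnp v v
      rw [← hts] at this
      exact this

private lemma rep_ne_nil {x : List X} (hx : x ≠ []) {n : ℕ} (hn : 1 ≤ n) :
    (List.replicate n x).flatten ≠ [] := by
  obtain ⟨m, rfl⟩ := Nat.exists_eq_add_of_le hn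
  simp [List.replicate_succ, hx]

end Aux

theorem stmt6 {X : Type*} [LinearOrder X] (a b : List X)
    (ha : IsLyndon a) (hb : IsLyndon b) (hab : List.Lex (· < ·) a b)
    (k l : ℕ) (hk : 1 ≤ k) (hl : 1 ≤ l) :
    IsLyndon ((List.replicate k a).flatten ++ (List.replicate l b).flatten) := by
  -- Step A: a ++ b^l is Lyndon and < b
  have stepA : ∀ l : ℕ, 1 ≤ l →
      IsLyndon (a ++ (List.replicate l b).flatten) ∧
      List.Lex (· < ·) (a ++ (List.replicate l b).flatten) b := by
    intro l hl
    induction l, hl using Nat.le_induction with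
    | base =>
      simp only [List.replicate_succ, List.replicate_zero, List.flatten_cons,
        List.flatten_nil, List.append_nil]
      exact ⟨core ha hb hab, core_lt ha.1 hb hab⟩
    | succ n hn ih =>
      have hrw : (List.replicate (n + 1) b).flatten
          = (List.replicate n b).flatten ++ b := by
        rw [List.replicate_succ']
        simp
      rw [hrw, ← List.append_assoc]
      exact ⟨core ih.1 hb ih.2, core_lt ih.1.1 hb ih.2⟩
  -- Step B: induction on k
  induction k, hk using Nat.le_induction with
  | base =>
    simpa [List.replicate_succ] using (stepA l hl).1
  | succ n hn ih =>
    have hrw : (List.replicate (n + 1) a).flatten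
        = a ++ (List.replicate n a).flatten := by
      simp [List.replicate_succ]
    rw [hrw, List.append_assoc]
    refine core ha ih ?_
    -- a < a^n b^l  since a is a proper prefix
    obtain ⟨m, rfl⟩ := Nat.exists_eq_add_of_le hn
    have hrw2 : (List.replicate (1 + m) a).flatten ++ (List.replicate l b).flatten
        = a ++ ((List.replicate m a).flatten ++ (List.replicate l b).flatten) := by
      rw [Nat.add_comm 1 m, List.replicate_succ, List.flatten_cons, List.append_assoc]
    rw [hrw2]
    refine lex_append_self ?_
    simp only [ne_eq, List.append_eq_nil_iff, not_and]
    intro _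
    exact rep_ne_nil hb.1 hl
end

section
/- Let l₁ ≥ l₂ ≥ ⋯ ≥ l_s be Lyndon words with s ≥ 2. If a Lyndon word u is a factor (contiguous subword) of the concatenation l₁ l₂ ⋯ l_s, then u is a factor of lᵢ for some i with 1 ≤ i ≤ s. -/
open List

section Aux

variable {X : Type*} [LinearOrder X]

instance lexIsTransAux : IsTrans (List X) (List.Lex (· < ·)) :=
  ⟨fun _ _ _ h₁ h₂ => List.lex_trans (fun h h' => lt_trans h h') h₁ h₂⟩

/-- A prefix is lex-less-or-equal. -/
lemma lex_of_prefix' {p w : List X} (h : p <+: w) : p = w ∨ List.Lex (· < ·) p w := by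
  rcases h with ⟨t, rfl⟩
  rcases eq_or_ne t [] with rfl | ht
  · left; simp
  · right
    induction p with
    | nil =>
      cases t with
      | nil => simp at ht
      | cons a t => exact List.Lex.nil
    | cons a p ih => exact List.Lex.cons ih

/-- Left cancellation for lex. -/
lemma lex_cancel_left : ∀ (x : List X) {y z : List X},
    List.Lex (· < ·) (x ++ y) (x ++ z) → List.Lex (· < ·) y z
  | [], _, _, h => h
  | a :: x, y, z, h => by
    cases h with
    | cons h' => exact lex_cancel_left x h'
    | rel h' => exact absurd h' (lt_irrefl a)

/-- If `x < b ++ c` then `x < b` or `b` is a prefix of `x`. -/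
lemma lex_append_right_cases : ∀ {x b : List X} (c : List X),
    List.Lex (· < ·) x (b ++ c) → List.Lex (· < ·) x b ∨ b <+: x := by
  intro x b
  induction b generalizing x with
  | nil => intro c h; right; exact nil_prefix
  | cons bh bt ih =>
    intro c h
    cases x with
    | nil => left; exact List.Lex.nil
    | cons xh xt =>
      cases h with
      | rel h' => left; exact List.Lex.rel h'
      | cons h' =>
        rcases ih c h' with h'' | h''
        · left; exact List.Lex.cons h''
        · right
          obtain ⟨tt, rfl⟩ := h''
          exact ⟨tt, rfl⟩

/-- If `x < y` with equal lengths, then `x ++ s < y ++ t`. -/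
lemma lex_append_of_lex_of_length : ∀ {x y : List X},
    List.Lex (· < ·) x y → x.length = y.length →
    ∀ (s t : List X), List.Lex (· < ·) (x ++ s) (y ++ t) := by
  intro x y h
  induction h with
  | nil => intro hl; simp at hl
  | @rel a l₁ b l₂ h' => intro _ s t; exact List.Lex.rel h'
  | @cons a l₁ l₂ h' ih =>
    intro hl s t
    simp only [length_cons, Nat.add_right_cancel_iff] at hl
    exact List.Lex.cons (ih hl s t)

/-- A Lyndon word is lex-smaller than each of its proper nonempty suffixes. -/
lemma lyndon_lex_suffix {w a b : List X} (hw : IsLyndon w) (ha : a ≠ []) (hb : b ≠ [])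
    (heq : w = a ++ b) : List.Lex (· < ·) w b := by
  have hr : List.Lex (· < ·) w (b ++ a) := hw.2 a b ha hb heq
  rcases lex_append_right_cases a hr with h | hpre
  · exact h
  · exfalso
    obtain ⟨c, hc⟩ := hpre
    have hcne : c ≠ [] := by
      rintro rfl
      rw [append_nil] at hc
      have := congrArg List.length heq
      rw [← hc, length_append] at this
      cases a with
      | nil => exact ha rfl
      | cons x xs => simp at this
    have hr2 : List.Lex (· < ·) w (c ++ b) := hw.2 b c hb hcne hc.symm
    have hca : List.Lex (· < ·) c a := by
      apply lex_cancel_left b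
      rw [hc]; exact hr
    have hlen : c.length = a.length := by
      have h1 := congrArg List.length hc
      have h2 := congrArg List.length heq
      simp only [length_append] at h1 h2
      omega
    have h3 : List.Lex (· < ·) (c ++ b) w := by
      rw [heq]; exact lex_append_of_lex_of_length hca hlen b b
    exact (irrefl w : ¬ List.Lex (· < ·) w w) (_root_.trans hr2 h3)

/-- An infix of `a ++ b` is an infix of `a`, an infix of `b`, or straddles the boundary. -/
lemma infix_append_cases {u a b : List X} (h : u <:+: a ++ b) :
    u <:+: a ∨ u <:+: b ∨
      ∃ p q, p ≠ [] ∧ q ≠ [] ∧ p <:+ a ∧ q <+: b ∧ u = p ++ q := by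
  obtain ⟨s, t, hst⟩ := h
  rw [append_assoc] at hst
  rcases List.append_eq_append_iff.mp hst with ⟨k, hk1, hk2⟩ | ⟨k, hk1, hk2⟩
  · rcases List.append_eq_append_iff.mp hk2 with ⟨m, hm1, hm2⟩ | ⟨m, hm1, hm2⟩
    · left
      exact List.IsInfix.trans (show u <+: k from ⟨m, hm1.symm⟩).isInfix
        ⟨s, [], by simp [hk1]⟩
    · rcases eq_or_ne k [] with rfl | hk
      · right; left
        simp only [nil_append] at hm1
        exact ⟨[], t, by simp [hm1, ← hm2]⟩
      · rcases eq_or_ne m [] with rfl | hm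
        · left
          rw [append_nil] at hm1
          exact ⟨s, [], by simp [hk1, hm1]⟩
        · right; right
          exact ⟨k, m, hk, hm, ⟨s, hk1.symm⟩, ⟨t, hm2.symm⟩, hm1⟩
  · right; left
    exact ⟨k, t, by rw [hk2, append_assoc]⟩

/-- A nonempty prefix of a flatten ends as a nonempty prefix of some block. -/
lemma prefix_flatten_decomp : ∀ {ms : List (List X)} {q : List X}, q ≠ [] → q <+: ms.flatten →
    ∃ mid l' rest q', ms = mid ++ l' :: rest ∧ q = mid.flatten ++ q' ∧ q' ≠ [] ∧ q' <+: l' := by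
  intro ms
  induction ms with
  | nil =>
    intro q hq h
    rw [flatten_nil, prefix_nil] at h
    exact absurd h hq
  | cons b ms ih =>
    intro q hq h
    rw [flatten_cons] at h
    obtain ⟨t, ht⟩ := h
    rcases List.append_eq_append_iff.mp ht with ⟨k, hk1, hk2⟩ | ⟨k, hk1, hk2⟩
    · exact ⟨[], b, ms, q, by simp, by simp, hq, ⟨k, hk1.symm⟩⟩
    · rcases eq_or_ne k [] with rfl | hk
      · rw [append_nil] at hk1
        exact ⟨[], b, ms, q, by simp, by simp, hq, by rw [hk1]⟩
      · obtain ⟨mid, l', rest, q', h1, h2, h3, h4⟩ := ih hk ⟨t, hk2.symm⟩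
        refine ⟨b :: mid, l', rest, q', by simp [h1], ?_, h3, h4⟩
        rw [hk1, h2, flatten_cons, append_assoc]

/-- If `u` is an infix of a flatten but of no single block, it straddles a boundary. -/
lemma straddle {u : List X} (hu : u ≠ []) : ∀ {ls : List (List X)}, u <:+: ls.flatten →
    (∀ l ∈ ls, ¬ u <:+: l) →
    ∃ pre l rest, ls = pre ++ l :: rest ∧ ∃ l' ∈ rest, ∃ p m q,
      u = p ++ m ++ q ∧ p ≠ [] ∧ q ≠ [] ∧ p <:+ l ∧ q <+: l' := by
  intro ls
  induction ls with
  | nil =>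
    intro h _
    rw [flatten_nil, infix_nil] at h
    exact absurd h hu
  | cons b ls ih =>
    intro h hc
    rw [flatten_cons] at h
    rcases infix_append_cases h with h1 | h2 | ⟨p, q, hp, hqne, hpb, hq, rfl⟩
    · exact absurd h1 (hc b mem_cons_self)
    · obtain ⟨pre, l, rest, h1, hrest⟩ := ih h2 (fun l hl => hc l (mem_cons_of_mem _ hl))
      exact ⟨b :: pre, l, rest, by rw [h1, cons_append], hrest⟩
    · obtain ⟨mid, l', rest, q', h1, h2, h3, h4⟩ := prefix_flatten_decomp hqne hq
      exact ⟨[], b, mid ++ l' :: rest, by rw [h1, nil_append], l',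
        by simp, p, mid.flatten, q', by rw [h2, List.append_assoc], hp, h3, hpb, h4⟩

end Aux

theorem stmt7 {X : Type*} [LinearOrder X] (ls : List (List X)) (hlen : 2 ≤ ls.length)
    (hL : ∀ l ∈ ls, IsLyndon l)
    (hsort : ls.Chain' (fun a b => ¬ List.Lex (· < ·) a b))
    (u : List X) (hu : IsLyndon u) (hinf : u <:+: ls.flatten) :
    ∃ l ∈ ls, u <:+: l := by
  by_contra hcon
  push_neg at hcon
  obtain ⟨pre, l, rest, hls, l', hl', p, m, q, hum, hp, hq, hpl, hql'⟩ :=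
    straddle hu.1 hinf hcon
  -- sortedness gives pairwise
  haveI : IsTrans (List X) (fun a b => ¬ List.Lex (· < ·) a b) := by
    constructor
    intro a b c hab hbc hac
    rcases lt_trichotomy a b with h | rfl | h
    · exact hab h
    · exact hbc hac
    · exact hbc (_root_.trans (show List.Lex (· < ·) b a from h) hac)
  have hpair : ls.Pairwise (fun a b => ¬ List.Lex (· < ·) a b) :=
    List.isChain_iff_pairwise.mp hsort
  rw [hls] at hpair
  have hnll' : ¬ List.Lex (· < ·) l l' :=
    List.rel_of_pairwise_cons (List.pairwise_append.mp hpair).2.1 hl'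
  -- memberships
  have hlmem : l ∈ ls := by rw [hls]; exact mem_append_right _ mem_cons_self
  have hl'mem : l' ∈ ls := by
    rw [hls]; exact mem_append_right _ (mem_cons_of_mem _ hl')
  have hLl := hL l hlmem
  -- u < q
  have huq : List.Lex (· < ·) u q :=
    lyndon_lex_suffix hu (a := p ++ m) (b := q) (by simp [hp]) hq
      (by rw [hum, List.append_assoc])
  -- l ≤ u
  have hlu : l = u ∨ List.Lex (· < ·) l u := by
    obtain ⟨a, ha⟩ := hpl
    have hpu : p <+: u := ⟨m ++ q, by rw [hum, List.append_assoc]⟩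
    rcases eq_or_ne a [] with rfl | hane
    · rw [nil_append] at ha
      rw [← ha]
      exact lex_of_prefix' hpu
    · have h1 : List.Lex (· < ·) l p := lyndon_lex_suffix hLl hane hp ha.symm
      rcases lex_of_prefix' hpu with rfl | h2
      · exact Or.inr h1
      · exact Or.inr (_root_.trans h1 h2)
  -- q ≤ l'
  have hql : q = l' ∨ List.Lex (· < ·) q l' := lex_of_prefix' hql'
  apply hnll'
  have hlq : List.Lex (· < ·) l q := by
    rcases hlu with rfl | h
    · exact huq
    · exact _root_.trans h huq
  rcases hql with rfl | h
  · exact hlq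
  · exact _root_.trans hlq h
end

section
/- Let N be a set of Lyndon words closed under taking Lyndon factors and containing the alphabet X, and let W be the set of Lyndon words not in N all of whose proper Lyndon factors lie in N. If u, v ∈ N with u < v and no element a of N satisfies u < a < v (lexicographically), then the concatenation uv belongs to W. -/
/-- `N` is a set of Lyndon words containing every letter of the alphabet and
closed under taking Lyndon factors ("Lyndon atoms"). -/
def IsLyndonSystem {X : Type*} [LinearOrder X] (N : Set (List X)) : Prop :=
  (∀ w ∈ N, IsLyndon w) ∧ (∀ x : X, [x] ∈ N) ∧
    (∀ w ∈ N, ∀ u : List X, IsLyndon u → u <:+: w → u ∈ N)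

/-- The antichain `W(N)` of Lyndon words associated to `N`: Lyndon words not
in `N` all of whose proper Lyndon factors lie in `N`. -/
def WSet {X : Type*} [LinearOrder X] (N : Set (List X)) : Set (List X) :=
  {w | IsLyndon w ∧ w ∉ N ∧ ∀ u : List X, IsLyndon u → u <:+: w → u ≠ w → u ∈ N}

namespace StmtNine

variable {X : Type*} [LinearOrder X]

local notation a " ≺ " b => List.Lex (· < ·) a b

/- The mathlib linear order on lists has `<` definitionally equal to `List.Lex (· < ·)`. -/
theorem lex_trans {a b c : List X} (h1 : a ≺ b) (h2 : b ≺ c) : a ≺ c :=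
  lt_trans (show a < b from h1) (show b < c from h2)

theorem lex_asymm {a b : List X} (h1 : a ≺ b) (h2 : b ≺ a) : False :=
  lt_asymm (show a < b from h1) (show b < a from h2)

theorem lex_irrefl {a : List X} (h : a ≺ a) : False := lt_irrefl a h

theorem lex_trichotomy (a b : List X) : (a ≺ b) ∨ a = b ∨ (b ≺ a) := lt_trichotomy a b

/-- extend on the right of both sides when not a prefix -/
theorem lex_append_of_not_prefix :
    ∀ {a b : List X}, (a ≺ b) → ¬ a <+: b → ∀ (c d : List X), (a ++ c) ≺ (b ++ d)
  | _, _, List.Lex.nil, hp, _, _ => absurd List.nil_prefix hp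
  | _, _, List.Lex.rel h, _, _, _ => List.Lex.rel h
  | _, _, @List.Lex.cons _ _ x a' b' h, hp, c, d =>
      List.Lex.cons (lex_append_of_not_prefix h
        (fun hpre => hp (List.cons_prefix_cons.mpr ⟨rfl, hpre⟩)) c d)

theorem lex_append_right' {a c : List X} (hc : c ≠ []) : a ≺ (a ++ c) := by
  induction a with
  | nil =>
    cases c with
    | nil => exact absurd rfl hc
    | cons x l => exact List.Lex.nil
  | cons x a' ih => exact List.Lex.cons ih

/-- a proper prefix is lexicographically smaller -/
theorem lex_of_proper_prefix {a b : List X} (h : a <+: b) (hne : a ≠ b) : a ≺ b := by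
  obtain ⟨c, rfl⟩ := h
  have hc : c ≠ [] := by rintro rfl; simp at hne
  exact lex_append_right' hc

theorem lex_of_append_left : ∀ (c : List X) {a b : List X}, ((c ++ a) ≺ (c ++ b)) → a ≺ b
  | [], _, _, h => h
  | x :: c', a, b, h => by
    cases h with
    | cons h => exact lex_of_append_left c' h
    | rel h => exact absurd h (lt_irrefl x)

/-- A Lyndon word is smaller than each of its proper nonempty suffixes. -/
theorem lyndon_lt_suffix {w a b : List X} (hw : IsLyndon w) (ha : a ≠ []) (hb : b ≠ [])
    (hsplit : w = a ++ b) : w ≺ b := by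
  rcases lex_trichotomy w b with h | h | h
  · exact h
  · exfalso
    have hlen : w.length = b.length := by rw [h]
    have hlen2 : w.length = a.length + b.length := by rw [hsplit, List.length_append]
    have ha' : a.length ≠ 0 := fun h0 => ha (List.length_eq_zero_iff.mp h0)
    omega
  · -- b ≺ w
    exfalso
    have hwba : w ≺ (b ++ a) := hw.2 a b ha hb hsplit
    by_cases hbp : b <+: w
    · obtain ⟨c, hc⟩ := hbp
      have hc0 : c ≠ [] := by
        rintro rfl
        rw [List.append_nil] at hc
        have : w.length = a.length + b.length := by rw [hsplit, List.length_append]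
        have : w.length = b.length := by rw [← hc]
        have : a.length ≠ 0 := fun h0 => ha (List.length_eq_zero_iff.mp h0)
        omega
      -- w = b ++ c
      have hwcb : w ≺ (c ++ b) := hw.2 b c hb hc0 hc.symm
      have hca : c ≺ a := by
        apply lex_of_append_left b
        rw [hc]; exact hwba
      have hlen : c.length = a.length := by
        have h1 : w.length = a.length + b.length := by rw [hsplit, List.length_append]
        have h2 : w.length = b.length + c.length := by rw [← hc, List.length_append]
        omega
      by_cases hceq : c = a
      · have hw' : w = b ++ a := by rw [← hc, hceq]
        rw [hw'] at hwba
        exact lex_irrefl hwba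
      · have hnp : ¬ c <+: a := fun hpre => hceq (hpre.eq_of_length hlen)
        have : (c ++ b) ≺ (a ++ b) := lex_append_of_not_prefix hca hnp b b
        rw [← hsplit] at this
        exact lex_asymm hwcb this
    · have : (b ++ a) ≺ (w ++ []) := lex_append_of_not_prefix h hbp a []
      rw [List.append_nil] at this
      exact lex_asymm hwba this

/-- converse: suffix condition implies Lyndon -/
theorem lyndon_of_suffix_condition {w : List X} (hw : w ≠ [])
    (h : ∀ a b : List X, a ≠ [] → b ≠ [] → w = a ++ b → w ≺ b) : IsLyndon w :=
  ⟨hw, fun a b ha hb hs => List.Lex.append_right _ a (h a b ha hb hs)⟩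

/-- helper: a prefix of `a ++ b` of length at most `|a|` is a prefix of `a` -/
theorem prefix_of_prefix_append {w a b : List X} (h : w <+: a ++ b)
    (hlen : w.length ≤ a.length) : w <+: a := by
  have hw : w = (a ++ b).take w.length := List.prefix_iff_eq_take.mp h
  rw [List.take_append] at hw
  rw [Nat.sub_eq_zero_of_le hlen, List.take_zero, List.append_nil] at hw
  rw [hw]; exact List.take_prefix _ _

theorem suffix_of_suffix_append {w a b : List X} (h : w <:+ a ++ b)
    (hlen : w.length ≤ b.length) : w <:+ b := by
  rw [← List.reverse_prefix] at h ⊢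
  rw [List.reverse_append] at h
  exact prefix_of_prefix_append h (by simpa using hlen)

/-- `u ++ v` is smaller than `v` when both are Lyndon and `u ≺ v`. -/
theorem lyndon_append_lt {u v : List X} (hu : IsLyndon u) (hv : IsLyndon v)
    (huv : u ≺ v) : (u ++ v) ≺ v := by
  by_cases hp : u <+: v
  · obtain ⟨c, hc⟩ := hp
    have hc0 : c ≠ [] := by
      rintro rfl
      rw [List.append_nil] at hc
      rw [hc] at huv
      exact lex_irrefl huv
    have : v ≺ c := lyndon_lt_suffix hv hu.1 hc0 hc.symm
    have h2 : (u ++ v) ≺ (u ++ c) := List.Lex.append_left _ this u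
    rw [hc] at h2
    exact h2
  · have : (u ++ v) ≺ (v ++ []) := lex_append_of_not_prefix huv hp v []
    rwa [List.append_nil] at this

/-- concatenation of two Lyndon words `u ≺ v` is Lyndon -/
theorem lyndon_append {u v : List X} (hu : IsLyndon u) (hv : IsLyndon v)
    (huv : u ≺ v) : IsLyndon (u ++ v) := by
  apply lyndon_of_suffix_condition (by simp [hu.1])
  intro a b ha hb hsplit
  rcases lt_trichotomy a.length u.length with h | h | h
  · -- a is a proper prefix of u ; b = (drop |a| u) ++ v
    have hau : a <+: u := by
      apply prefix_of_prefix_append (b := v) _ (le_of_lt h)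
      exact ⟨b, hsplit.symm⟩
    obtain ⟨s, hs⟩ := hau
    have hs0 : s ≠ [] := by
      rintro rfl
      rw [List.append_nil] at hs
      rw [hs] at h; omega
    have hb' : b = s ++ v := by
      apply List.append_cancel_left (as := a)
      rw [← hsplit, ← List.append_assoc, hs]
    have h1 : u ≺ s := lyndon_lt_suffix hu ha hs0 hs.symm
    have hnp : ¬ u <+: s := by
      intro hpre
      have := hpre.length_le
      have : s.length < u.length := by
        have := congrArg List.length hs
        simp [List.length_append] at this
        have ha' : a.length ≠ 0 := fun h0 => ha (List.length_eq_zero_iff.mp h0)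
        omega
      omega
    have := lex_append_of_not_prefix h1 hnp v v
    rwa [hb']
  · -- a = u, b = v
    have := List.append_inj (hsplit.symm : a ++ b = u ++ v) h
    rw [this.2]
    exact lyndon_append_lt hu hv huv
  · -- u is a proper prefix of a; b is a proper suffix of v
    have hua : u <+: a := by
      apply prefix_of_prefix_append (b := b) _ (le_of_lt h)
      exact ⟨v, hsplit⟩
    obtain ⟨p, hp⟩ := hua
    have hp0 : p ≠ [] := by
      rintro rfl
      rw [List.append_nil] at hp
      rw [hp] at h; omega
    have hv' : v = p ++ b := by
      apply List.append_cancel_left (as := u)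
      rw [hsplit, ← hp, List.append_assoc]
    have h1 : v ≺ b := lyndon_lt_suffix hv hp0 hb hv'
    exact lex_trans (lyndon_append_lt hu hv huv) h1

/-- straddling Lyndon factors sit strictly between `u` and `v` -/
theorem straddle_bounds {u v s p : List X} (hu : IsLyndon u) (hw : IsLyndon (s ++ p))
    (hs0 : s ≠ []) (hp0 : p ≠ []) (hsu : s <:+ u) (hpv : p <+: v) :
    (u ≺ (s ++ p)) ∧ ((s ++ p) ≺ v) := by
  constructor
  · obtain ⟨a, ha⟩ := hsu
    by_cases ha0 : a = []
    · subst ha0; simp only [List.nil_append] at ha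
      subst ha
      exact lex_append_right' hp0
    · have h1 : u ≺ s := lyndon_lt_suffix hu ha0 hs0 ha.symm
      have h2 : s ≺ (s ++ p) := lex_append_right' hp0
      exact lex_trans h1 h2
  · have h1 : (s ++ p) ≺ p := lyndon_lt_suffix hw hs0 hp0 rfl
    obtain ⟨d, hd⟩ := hpv
    by_cases hd0 : d = []
    · subst hd0; rw [List.append_nil] at hd; rwa [← hd]
    · exact lex_trans h1 (hd ▸ lex_append_right' hd0)

/-- standard factorization of a Lyndon word of length at least two -/
theorem std_factorization {t : List X} (ht : IsLyndon t) (h2 : 2 ≤ t.length) :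
    ∃ t1 t2 : List X, IsLyndon t1 ∧ IsLyndon t2 ∧ t1 ≠ [] ∧ t2 ≠ [] ∧
      t = t1 ++ t2 ∧ (t1 ≺ t2) := by
  classical
  set cands : List (List X) := t.tails.filter (fun s => s ≠ [] ∧ s ≠ t) with hcands
  have hmem : ∀ s : List X, s ∈ cands ↔ (s <:+ t ∧ s ≠ [] ∧ s ≠ t) := by
    intro s
    simp [hcands, List.mem_filter, List.mem_tails, and_assoc]
  have hne : t.drop 1 ∈ cands := by
    rw [hmem]
    refine ⟨List.drop_suffix _ _, ?_, ?_⟩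
    · intro h0
      have := congrArg List.length h0
      simp at this
      omega
    · intro h0
      have := congrArg List.length h0
      simp at this
      omega
  have hcne : cands ≠ [] := fun h0 => by rw [h0] at hne; exact absurd hne List.not_mem_nil
  obtain ⟨t2, ht2arg⟩ : ∃ m, m ∈ List.argmin id cands := by
    cases harg : List.argmin id cands with
    | none => exact absurd (List.argmin_eq_none.mp harg) hcne
    | some m => exact ⟨m, rfl⟩
  have ht2mem := List.argmin_mem ht2arg
  rw [hmem] at ht2mem
  obtain ⟨ht2suf, ht20, ht2ne⟩ := ht2mem
  have hmin : ∀ s : List X, s <:+ t → s ≠ [] → s ≠ t → (t2 ≺ s) ∨ t2 = s := by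
    intro s hsuf hs0 hst
    have hle : t2 ≤ s := List.le_of_mem_argmin (f := id) ((hmem s).mpr ⟨hsuf, hs0, hst⟩) (by convert ht2arg)
    rcases lt_or_eq_of_le hle with h | h
    · exact Or.inl h
    · exact Or.inr h
  obtain ⟨t1, ht1⟩ := ht2suf
  have ht10 : t1 ≠ [] := by
    rintro rfl
    rw [List.nil_append] at ht1
    exact ht2ne ht1
  have hteq : t = t1 ++ t2 := ht1.symm
  have hlent : t.length = t1.length + t2.length := by rw [hteq, List.length_append]
  have ht1len : 0 < t1.length := List.length_pos_iff.mpr ht10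
  have ht2len : 0 < t2.length := List.length_pos_iff.mpr ht20
  have hminlt : ∀ s : List X, s <:+ t → s ≠ [] → s ≠ t → s.length ≠ t2.length → t2 ≺ s := by
    intro s hsuf hs0 hst hlen
    rcases hmin s hsuf hs0 hst with h | h
    · exact h
    · exact absurd (congrArg List.length h).symm hlen
  have ht2lyn : IsLyndon t2 := by
    apply lyndon_of_suffix_condition ht20
    intro a b ha hb hsplit
    have hal : 0 < a.length := List.length_pos_iff.mpr ha
    have hbl : 0 < b.length := List.length_pos_iff.mpr hb
    have hsl := congrArg List.length hsplit
    rw [List.length_append] at hsl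
    have hbt2 : b <:+ t2 := ⟨a, hsplit.symm⟩
    have hbsuf : b <:+ t := hbt2.trans ⟨t1, ht1⟩
    have hbne : b ≠ t := by
      intro h0
      have := congrArg List.length h0
      omega
    exact hminlt b hbsuf hb hbne (by omega)
  have ht1lyn : IsLyndon t1 := by
    apply lyndon_of_suffix_condition ht10
    intro a b ha hb hsplit
    have hal : 0 < a.length := List.length_pos_iff.mpr ha
    have hbl : 0 < b.length := List.length_pos_iff.mpr hb
    have hsl := congrArg List.length hsplit
    rw [List.length_append] at hsl
    rcases lex_trichotomy t1 b with h | h | h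
    · exact h
    · exfalso
      have := congrArg List.length h
      omega
    · exfalso
      by_cases hbp : b <+: t1
      · obtain ⟨c, hc⟩ := hbp
        have hcl := congrArg List.length hc
        rw [List.length_append] at hcl
        have hc0 : c ≠ [] := by
          rintro rfl
          simp at hcl
          omega
        have hcl0 : 0 < c.length := List.length_pos_iff.mpr hc0
        have htbc : t = b ++ (c ++ t2) := by rw [hteq, ← hc, List.append_assoc]
        have hsufc : (c ++ t2) <:+ t := ⟨b, htbc.symm⟩
        have hc2ne0 : (c ++ t2) ≠ [] := by simp [ht20]
        have hc2l : (c ++ t2).length = c.length + t2.length := List.length_append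
        have hcne' : (c ++ t2) ≠ t := by
          intro h0
          have := congrArg List.length h0
          omega
        have hmin' : t2 ≺ (c ++ t2) := hminlt _ hsufc hc2ne0 hcne' (by omega)
        have hbt20 : (b ++ t2) ≠ [] := by simp [ht20]
        have hta : t = a ++ (b ++ t2) := by rw [hteq, hsplit, List.append_assoc]
        have h1 : t ≺ (b ++ t2) := lyndon_lt_suffix ht ha hbt20 hta
        have h1' : (b ++ (c ++ t2)) ≺ (b ++ t2) := by rw [← htbc]; exact h1
        have h2' : (c ++ t2) ≺ t2 := lex_of_append_left b h1'
        exact lex_asymm hmin' h2'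
      · have h1 : (b ++ t2) ≺ (t1 ++ t2) := lex_append_of_not_prefix h hbp t2 t2
        rw [← hteq] at h1
        have hta : t = a ++ (b ++ t2) := by rw [hteq, hsplit, List.append_assoc]
        have hbt20 : (b ++ t2) ≠ [] := by simp [ht20]
        have h2 : t ≺ (b ++ t2) := lyndon_lt_suffix ht ha hbt20 hta
        exact lex_asymm h2 h1
  have hlex : t1 ≺ t2 := by
    have h1 : t1 ≺ t := by rw [hteq]; exact lex_append_right' ht20
    have h2 : t ≺ t2 := lyndon_lt_suffix ht ht10 ht20 hteq
    exact lex_trans h1 h2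
  exact ⟨t1, t2, ht1lyn, ht2lyn, ht10, ht20, hteq, hlex⟩

/-- decomposition of an infix of a concatenation -/
theorem infix_decomp {t u v : List X} (h : t <:+: u ++ v) (hv : v ≠ []) :
    t <:+: u ∨ t <:+: v ∨
      ∃ s p : List X, s ≠ [] ∧ p ≠ [] ∧ s <:+ u ∧ p <+: v ∧ t = s ++ p := by
  obtain ⟨x, y, hxy⟩ := h
  by_cases h1 : x.length + t.length ≤ u.length
  · left
    have hpre : x ++ t <+: u ++ v := ⟨y, hxy⟩
    have hpre' : x ++ t <+: u := prefix_of_prefix_append hpre (by simp; omega)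
    obtain ⟨r, hr⟩ := hpre'
    exact ⟨x, r, by rw [← hr, List.append_assoc]⟩
  · by_cases h2 : u.length ≤ x.length
    · right; left
      have hsuf : t ++ y <:+ u ++ v := ⟨x, by rw [← List.append_assoc]; exact hxy⟩
      have hlen : (t ++ y).length ≤ v.length := by
        have := congrArg List.length hxy
        simp [List.length_append] at this ⊢
        omega
      have hsuf' : t ++ y <:+ v := suffix_of_suffix_append hsuf hlen
      obtain ⟨r, hr⟩ := hsuf'
      exact ⟨r, y, by rw [← hr, List.append_assoc]⟩
    · right; right
      push_neg at h1 h2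
      refine ⟨u.drop x.length, v.take (x.length + t.length - u.length), ?_, ?_, ?_, ?_, ?_⟩
      · intro h0
        have h0' : (u.drop x.length).length = 0 := by rw [h0]; rfl
        rw [List.length_drop] at h0'
        omega
      · intro h0
        have h0' : (v.take (x.length + t.length - u.length)).length = 0 := by rw [h0]; rfl
        rw [List.length_take] at h0'
        have hvl : 0 < v.length := List.length_pos_iff.mpr hv
        omega
      · exact List.drop_suffix _ _
      · exact List.take_prefix _ _
      · -- t = drop |x| u ++ take (|x|+|t|-|u|) v
        have hty : t ++ y = u.drop x.length ++ v := by
          have hd : (x ++ (t ++ y)).drop x.length = t ++ y := List.drop_left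
          rw [show x ++ (t ++ y) = u ++ v by rw [← List.append_assoc]; exact hxy] at hd
          rw [List.drop_append] at hd
          rw [Nat.sub_eq_zero_of_le (le_of_lt h2), List.drop_zero] at hd
          exact hd.symm
        have ht : t = (t ++ y).take t.length := List.take_left.symm
        rw [hty] at ht
        rw [List.take_append] at ht
        rw [List.take_of_length_le (by rw [List.length_drop]; omega)] at ht
        rw [List.length_drop] at ht
        rw [show x.length + t.length - u.length = t.length - (u.length - x.length) by omega]
        exact ht

end StmtNine

theorem stmt9 {X : Type*} [LinearOrder X] (N : Set (List X)) (hN : IsLyndonSystem N)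
    (u v : List X) (hu : u ∈ N) (hv : v ∈ N) (huv : List.Lex (· < ·) u v)
    (hgap : ∀ a ∈ N, ¬ (List.Lex (· < ·) u a ∧ List.Lex (· < ·) a v)) :
    u ++ v ∈ WSet N := by
  classical
  obtain ⟨hNlyn, hNsingle, hNclosed⟩ := hN
  have hul := hNlyn u hu
  have hvl := hNlyn v hv
  have hune := hul.1
  have hvne := hvl.1
  have huvl : IsLyndon (u ++ v) := StmtNine.lyndon_append hul hvl huv
  -- main induction: every proper Lyndon factor of u ++ v lies in N
  have key : ∀ n : ℕ, ∀ t : List X, t.length ≤ n → IsLyndon t → t <:+: u ++ v →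
      t ≠ u ++ v → t ∈ N := by
    intro n
    induction n with
    | zero =>
      intro t htn htl _ _
      exact absurd (List.length_eq_zero_iff.mp (Nat.le_zero.mp htn)) htl.1
    | succ n ih =>
      intro t htn htl htf htne
      rcases StmtNine.infix_decomp htf hvne with hc | hc | hc
      · exact hNclosed u hu t htl hc
      · exact hNclosed v hv t htl hc
      · obtain ⟨s, p, hs0, hp0, hsu, hpv, rfl⟩ := hc
        exfalso
        have hslen : 0 < s.length := List.length_pos_iff.mpr hs0
        have hplen : 0 < p.length := List.length_pos_iff.mpr hp0
        have h2 : 2 ≤ (s ++ p).length := by simp [List.length_append]; omega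
        obtain ⟨t1, t2, ht1l, ht2l, ht10, ht20, hteq, ht12⟩ :=
          StmtNine.std_factorization htl h2
        have ht1len : 0 < t1.length := List.length_pos_iff.mpr ht10
        have ht2len : 0 < t2.length := List.length_pos_iff.mpr ht20
        have hlent : (s ++ p).length = t1.length + t2.length := by
          rw [hteq, List.length_append]
        have htuv : (s ++ p).length ≤ (u ++ v).length := htf.length_le
        -- t1 and t2 are in N by induction
        have ht1N : t1 ∈ N := by
          apply ih t1 (by omega) ht1l
          · exact (List.IsPrefix.isInfix ⟨t2, hteq.symm⟩).trans htf
          · intro h0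
            have := congrArg List.length h0
            have hne' : (s ++ p).length ≠ (u ++ v).length := by
              intro hh
              exact htne (htf.eq_of_length hh)
            omega
        have ht2N : t2 ∈ N := by
          apply ih t2 (by omega) ht2l
          · exact (List.IsSuffix.isInfix ⟨t1, hteq.symm⟩).trans htf
          · intro h0
            have := congrArg List.length h0
            have hne' : (s ++ p).length ≠ (u ++ v).length := by
              intro hh
              exact htne (htf.eq_of_length hh)
            omega
        rcases lt_trichotomy t1.length s.length with hc' | hc' | hc'
        · -- t2 straddles
          have ht1s : t1 <+: s := by
            apply StmtNine.prefix_of_prefix_append (b := p) _ (le_of_lt hc')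
            exact ⟨t2, hteq.symm⟩
          obtain ⟨s', hs'⟩ := ht1s
          have hs'0 : s' ≠ [] := by
            rintro rfl
            rw [List.append_nil] at hs'
            rw [hs'] at hc'
            omega
          have ht2eq : t2 = s' ++ p := by
            apply List.append_cancel_left (as := t1)
            rw [← hteq, ← List.append_assoc, hs']
          have hs's : s' <:+ s := ⟨t1, hs'⟩
          have hs'u : s' <:+ u := hs's.trans hsu
          have hb := StmtNine.straddle_bounds hul (ht2eq ▸ ht2l) hs'0 hp0 hs'u hpv
          rw [← ht2eq] at hb
          exact hgap t2 ht2N ⟨hb.1, hb.2⟩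
        · -- boundary coincides: t1 = s, t2 = p
          obtain ⟨hts, htp⟩ := List.append_inj hteq.symm hc'
          subst hts; subst htp
          -- s ++ p ≠ u ++ v
          by_cases hsu' : t1 = u
          · -- then t2 ≠ v, t2 proper prefix of v
            have htpv : t2 ≠ v := by
              intro h0
              exact htne (by rw [hsu', h0])
            have h1 : List.Lex (· < ·) u t2 := hsu' ▸ ht12
            have h2 : List.Lex (· < ·) t2 v := StmtNine.lex_of_proper_prefix hpv htpv
            exact hgap t2 ht2N ⟨h1, h2⟩
          · obtain ⟨a, haeq⟩ := hsu
            have ha0 : a ≠ [] := by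
              rintro rfl
              rw [List.nil_append] at haeq
              exact hsu' haeq
            have h1 : List.Lex (· < ·) u t1 := StmtNine.lyndon_lt_suffix hul ha0 hs0 haeq.symm
            have h2 : List.Lex (· < ·) t1 v := by
              obtain ⟨d, hd⟩ := hpv
              by_cases hd0 : d = []
              · subst hd0
                rw [List.append_nil] at hd
                rw [hd] at ht12
                exact ht12
              · exact StmtNine.lex_trans ht12 (hd ▸ StmtNine.lex_append_right' hd0)
            exact hgap t1 ht1N ⟨h1, h2⟩
        · -- t1 straddles
          have hst1 : s <+: t1 := by
            apply StmtNine.prefix_of_prefix_append (b := t2) _ (le_of_lt hc')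
            exact ⟨p, hteq⟩
          obtain ⟨p', hp'⟩ := hst1
          have hp'0 : p' ≠ [] := by
            rintro rfl
            rw [List.append_nil] at hp'
            rw [← hp'] at hc'
            omega
          have hpeq : p = p' ++ t2 := by
            apply List.append_cancel_left (as := s)
            rw [hteq, ← hp', List.append_assoc]
          have hp'p : p' <+: p := ⟨t2, hpeq.symm⟩
          have hp'v : p' <+: v := hp'p.trans hpv
          have hb := StmtNine.straddle_bounds hul (hp' ▸ ht1l) hs0 hp'0 hsu hp'v
          rw [hp'] at hb
          exact hgap t1 ht1N ⟨hb.1, hb.2⟩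
  refine ⟨huvl, ?_, ?_⟩
  · intro hmem
    refine hgap (u ++ v) hmem ⟨?_, ?_⟩
    · exact StmtNine.lex_append_right' hvne
    · exact StmtNine.lyndon_append_lt hul hvl huv
  · intro t htl htf htne
    exact key (u ++ v).length t htf.length_le htl htf htne
end

section
/- Let (N, W) be a Lyndon pair with N of finite cardinality d. Then the cardinality of W satisfies d − 1 ≤ |W|. -/
namespace LyndonAux

variable {X : Type*} [LinearOrder X]

lemma prefix_lex {x y : List X} (h : x <+: y) (hne : x ≠ y) : List.Lex (· < ·) x y := by
  obtain ⟨t, rfl⟩ := h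
  have ht : t ≠ [] := by rintro rfl; simp at hne
  clear hne
  induction x with
  | nil =>
    cases t with
    | nil => exact absurd rfl ht
    | cons a t => exact List.Lex.nil
  | cons a x ih => exact List.Lex.cons ih

lemma lex_ext : ∀ {x y : List X}, List.Lex (· < ·) x y → y.length ≤ x.length →
    ∀ s, List.Lex (· < ·) (x ++ s) y
  | _, _, List.Lex.nil, hl, _ => by simp at hl
  | _, _, List.Lex.cons h, hl, s => List.Lex.cons (lex_ext h (by simpa using hl) s)
  | _, _, List.Lex.rel h, _, _ => List.Lex.rel h

lemma lex_master : ∀ (x : List X) {y s t : List X}, List.Lex (· < ·) (x ++ s) (y ++ t) →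
    y.length ≤ x.length → List.Lex (· < ·) x y ∨ y <+: x := by
  intro x
  induction x with
  | nil =>
    intro y s t h hl
    have : y = [] := List.length_eq_zero_iff.mp (Nat.le_zero.mp hl)
    subst this
    exact Or.inr List.nil_prefix
  | cons a x ih =>
    intro y s t h hl
    cases y with
    | nil => exact Or.inr List.nil_prefix
    | cons b y =>
      simp only [List.cons_append] at h
      cases h with
      | cons h' =>
        rcases ih h' (by simpa using hl) with h'' | h''
        · exact Or.inl (List.Lex.cons h'')
        · exact Or.inr ((List.prefix_cons_inj a).mpr h'')
      | rel hab => exact Or.inl (List.Lex.rel hab)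

lemma lex_strip : ∀ (c : List X) {x y : List X},
    List.Lex (· < ·) (c ++ x) (c ++ y) → List.Lex (· < ·) x y
  | [], _, _, h => h
  | a :: c, x, y, h => by
    simp only [List.cons_append] at h
    cases h with
    | cons h => exact lex_strip c h
    | rel h => exact absurd h (lt_irrefl a)

lemma lex_or_prefix : ∀ {x y : List X} (s : List X), List.Lex (· < ·) x y →
    List.Lex (· < ·) (x ++ s) y ∨ x <+: y
  | [], _, _, _ => Or.inr List.nil_prefix
  | a :: x, b :: y, s, h => by
    cases h with
    | cons h =>
      rcases lex_or_prefix s h with h' | h'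
      · exact Or.inl (List.Lex.cons h')
      · exact Or.inr ((List.prefix_cons_inj a).mpr h')
    | rel h => exact Or.inl (List.Lex.rel h)

/-- Lyndon words are unbordered. -/
lemma border_free {w a b : List X} (hw : IsLyndon w) (ha : a ≠ []) (hb : b ≠ [])
    (hab : w = a ++ b) (hpre : b <+: w) : False := by
  obtain ⟨c, hc⟩ := hpre
  have hlen0 : a.length + b.length = b.length + c.length := by
    simpa using congrArg List.length (hab.symm.trans hc.symm)
  have hlen : a.length = c.length := by omega
  have hcne : c ≠ [] := by
    rintro rfl
    exact ha (List.length_eq_zero_iff.mp (by simpa using hlen))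
  have h1 : List.Lex (· < ·) (b ++ c) (b ++ a) := by
    rw [hc]; exact hw.2 a b ha hb hab
  have h1' : List.Lex (· < ·) c a := lex_strip b h1
  have h2 : List.Lex (· < ·) (a ++ b) (c ++ b) := by
    rw [← hab]; exact hw.2 b c hb hcne hc.symm
  rcases lex_master a h2 (le_of_eq hlen.symm) with h3 | h3
  · exact lt_asymm (show (a:List X) < c from h3) h1'
  · have : c = a := h3.eq_of_length hlen.symm
    subst this
    exact lt_irrefl _ (show (c:List X) < c from h1')

/-- A Lyndon word is lexicographically smaller than each of its proper suffixes. -/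
lemma lyndon_lt_suffix_s10 {w b : List X} (hw : IsLyndon w) (hb : b <:+ w) (hbne : b ≠ [])
    (hbw : b ≠ w) : List.Lex (· < ·) w b := by
  obtain ⟨a, ha⟩ := hb
  have hane : a ≠ [] := by rintro rfl; exact hbw (by simpa using ha)
  have h := hw.2 a b hane hbne ha.symm
  have hlen : b.length ≤ w.length := by
    have h0 : a.length + b.length = w.length := by simpa using congrArg List.length ha
    omega
  rcases lex_master w (s := []) (t := a) (by simpa using h) hlen with h' | h'
  · exact h'
  · exact absurd (border_free hw hane hbne ha.symm h') id

/-- Converse characterization: a nonempty word smaller than all its proper suffixes is Lyndon. -/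
lemma lyndon_of_suffix {w : List X} (hne : w ≠ [])
    (h : ∀ b, b <:+ w → b ≠ [] → b ≠ w → List.Lex (· < ·) w b) : IsLyndon w := by
  refine ⟨hne, fun a b ha hb hab => ?_⟩
  have hsuf : b <:+ w := ⟨a, hab.symm⟩
  have hbw : b ≠ w := by
    rintro rfl
    have h0 : b.length = a.length + b.length := by simpa using congrArg List.length hab
    exact ha (List.length_eq_zero_iff.mp (by omega))
  exact List.Lex.append_right _ a (h b hsuf hb hbw)

lemma lyndon_append_lex {u v : List X} (hv : IsLyndon v) (huv : List.Lex (· < ·) u v)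
    (hu : u ≠ []) : List.Lex (· < ·) (u ++ v) v := by
  rcases lex_or_prefix v huv with h | h
  · exact h
  · obtain ⟨c, hc⟩ := h
    have hcne : c ≠ [] := by
      rintro rfl
      rw [List.append_nil] at hc
      subst hc
      exact lt_irrefl _ (show (u:List X) < u from huv)
    have hcv : c ≠ v := by
      intro hcv
      have h0 : u.length + c.length = v.length := by simpa using congrArg List.length hc
      rw [hcv] at h0
      exact hu (List.length_eq_zero_iff.mp (by omega))
    have h2 : List.Lex (· < ·) v c := lyndon_lt_suffix_s10 hv ⟨u, hc⟩ hcne hcv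
    have h3 := List.Lex.append_left (· < ·) h2 u
    rwa [hc] at h3

lemma lyndon_append {u v : List X} (hu : IsLyndon u) (hv : IsLyndon v)
    (huv : List.Lex (· < ·) u v) : IsLyndon (u ++ v) := by
  apply lyndon_of_suffix (by simp [hu.1])
  intro t ht htne htw
  obtain ⟨x, hx⟩ := ht
  have G : List.Lex (· < ·) (u ++ v) v := lyndon_append_lex hv huv hu.1
  rcases le_or_gt t.length v.length with hle | hlt
  · -- t is a suffix of v
    have htv : t <:+ v := by
      have h1 : t <:+ u ++ v := ⟨x, hx⟩
      have h2 : v <:+ u ++ v := List.suffix_append u v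
      have h3 := List.prefix_of_prefix_length_le
        (List.reverse_prefix.mpr h1) (List.reverse_prefix.mpr h2)
        (by simpa using hle)
      exact List.reverse_prefix.mp h3
    rcases eq_or_ne t v with rfl | htvne
    · exact G
    · exact lt_trans (show (u++v : List X) < v from G)
        (show (v:List X) < t from lyndon_lt_suffix_s10 hv htv htne htvne)
  · -- t = s ++ v with s a proper nonempty suffix of u
    have hxu : x <+: u := by
      have h1 : x <+: u ++ v := ⟨t, hx⟩
      have h2 : u <+: u ++ v := List.prefix_append u v
      refine List.prefix_of_prefix_length_le h1 h2 ?_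
      have h0 : x.length + t.length = u.length + v.length := by
        simpa using congrArg List.length hx
      omega
    obtain ⟨s, hs⟩ := hxu
    have hsv : t = s ++ v := by
      have : x ++ t = x ++ (s ++ v) := by rw [hx, ← hs]; simp
      exact List.append_cancel_left this
    have hsne : s ≠ [] := by
      rintro rfl
      rw [List.nil_append] at hsv
      rw [hsv] at hlt
      exact lt_irrefl _ hlt
    have hsu : s ≠ u := by
      rintro rfl
      exact htw (by rw [hsv])
    have hss : s <:+ u := ⟨x, hs⟩
    have h4 : List.Lex (· < ·) u s := lyndon_lt_suffix_s10 hu hss hsne hsu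
    have hlen : s.length ≤ u.length := hss.length_le
    have h5 : List.Lex (· < ·) (u ++ v) s := lex_ext h4 hlen v
    rw [hsv]
    exact List.Lex.append_right _ v h5

/-- Splitting an infix of a concatenation. -/
lemma infix_split {z w v : List X} (h : z <:+: w ++ v) :
    z <:+: w ∨ z <:+: v ∨ ∃ s p, s ≠ [] ∧ p ≠ [] ∧ s <:+ w ∧ p <+: v ∧ z = s ++ p := by
  obtain ⟨x, y, hxy⟩ := h
  rcases List.append_eq_append_iff.mp (show x ++ (z ++ y) = w ++ v by rw [← hxy]; simp) with
    ⟨a, haw, hav⟩ | ⟨c, hcx, hcv⟩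
  · -- w = x ++ a, z ++ y = a ++ v
    rcases List.append_eq_append_iff.mp hav with ⟨a', ha1, ha2⟩ | ⟨b, hb1, hb2⟩
    · -- a = z ++ a' : z <:+: w
      left
      exact ⟨x, a', by rw [haw, ha1]; simp⟩
    · -- z = a ++ b, v = b ++ y
      rcases eq_or_ne a [] with rfl | hane
      · right; left
        exact ⟨[], y, by simp [hb1, hb2.symm]⟩
      rcases eq_or_ne b [] with rfl | hbne
      · left
        refine ⟨x, [], ?_⟩
        rw [haw, hb1]; simp
      · right; right
        exact ⟨a, b, hane, hbne, ⟨x, haw.symm⟩, ⟨y, hb2.symm⟩, hb1⟩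
  · -- x = w ++ c, v = c ++ (z ++ y) : z <:+: v
    right; left
    exact ⟨c, y, by rw [hcv, List.append_assoc]⟩

/-- Every Lyndon word outside `N` contains a factor in `W(N)`. -/
lemma exists_wset_factor {N : Set (List X)} (hN : IsLyndonSystem N) :
    ∀ (z₀ : List X), IsLyndon z₀ → z₀ ∉ N → ∃ z ∈ WSet N, z <:+: z₀ := by
  have main : ∀ n (z₀ : List X), z₀.length ≤ n → IsLyndon z₀ → z₀ ∉ N →
      ∃ z ∈ WSet N, z <:+: z₀ := by
    intro n
    induction n with
    | zero =>
      intro z₀ hl hz _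
      exact absurd (List.length_eq_zero_iff.mp (Nat.le_zero.mp hl)) hz.1
    | succ n ih =>
      intro z₀ hl hz hzN
      by_cases hall : ∀ u : List X, IsLyndon u → u <:+: z₀ → u ≠ z₀ → u ∈ N
      · exact ⟨z₀, ⟨hz, hzN, hall⟩, List.infix_refl z₀⟩
      · push_neg at hall
        obtain ⟨u, hu1, hu2, hu3, hu4⟩ := hall
        have hlen : u.length < z₀.length := by
          rcases lt_or_eq_of_le hu2.length_le with h | h
          · exact h
          · exact absurd (hu2.eq_of_length h) hu3
        obtain ⟨z, hz1, hz2⟩ := ih u (by omega) hu1 hu4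
        exact ⟨z, hz1, hz2.trans hu2⟩
  intro z₀ h1 h2
  exact main z₀.length z₀ le_rfl h1 h2

/-- Standard-type factorization: any Lyndon word of length ≥ 2 is a concatenation of
two nonempty Lyndon words. -/
lemma lyndon_factorization {w : List X} (hw : IsLyndon w) (h2 : 2 ≤ w.length) :
    ∃ u v : List X, u ≠ [] ∧ v ≠ [] ∧ IsLyndon u ∧ IsLyndon v ∧ w = u ++ v := by
  classical
  set S : Set (List X) := {t | t <:+ w ∧ t ≠ [] ∧ t ≠ w} with hS
  have hSfin : S.Finite := by
    apply Set.Finite.subset (w.tails.toFinset).finite_toSet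
    intro t ht
    simp only [List.coe_toFinset, Set.mem_setOf_eq, List.mem_tails]
    exact ht.1
  have hSne : S.Nonempty := by
    refine ⟨w.drop 1, List.drop_suffix 1 w, ?_, ?_⟩
    · intro h
      have : (w.drop 1).length = 0 := by rw [h]; rfl
      rw [List.length_drop] at this
      omega
    · intro h
      have := congrArg List.length h
      rw [List.length_drop] at this
      omega
  obtain ⟨v, hvS, hvmin⟩ := Set.exists_min_image S id hSfin hSne
  obtain ⟨hvw, hvne, hvnw⟩ := hvS
  have hvlen : v.length < w.length := by
    rcases lt_or_eq_of_le hvw.length_le with h | h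
    · exact h
    · exact absurd (hvw.eq_of_length h) hvnw
  -- v is Lyndon
  have hvL : IsLyndon v := by
    apply lyndon_of_suffix hvne
    intro t ht htne htv
    have htS : t ∈ S := by
      refine ⟨ht.trans hvw, htne, ?_⟩
      intro h
      have h1 := ht.length_le
      rcases lt_or_eq_of_le h1 with h1 | h1
      · rw [h] at h1; omega
      · exact htv (ht.eq_of_length h1)
    have := hvmin t htS
    exact lt_of_le_of_ne (show (v:List X) ≤ t from this) (by exact fun h => htv h.symm)
  obtain ⟨u, hu⟩ := hvw
  have hune : u ≠ [] := by rintro rfl; exact hvnw (by simpa using hu)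
  have huL : IsLyndon u := by
    apply lyndon_of_suffix hune
    intro b hb hbne hbu
    have hblen : b.length < u.length := by
      rcases lt_or_eq_of_le hb.length_le with h | h
      · exact h
      · exact absurd (hb.eq_of_length h) hbu
    have hbvS : b ++ v ∈ S := by
      refine ⟨?_, by simp [hbne], ?_⟩
      · obtain ⟨m, hm⟩ := hb
        exact ⟨m, by rw [← hu, ← hm]; simp⟩
      · intro h
        have h0 : b.length + v.length = w.length := by simpa using congrArg List.length h
        have h1 : u.length + v.length = w.length := by simpa using congrArg List.length hu
        omega
    have hwlt : List.Lex (· < ·) w (b ++ v) :=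
      lyndon_lt_suffix_s10 hw hbvS.1 (by simp [hbne]) hbvS.2.2
    have hwlt' : List.Lex (· < ·) (u ++ v) (b ++ v) := by rw [hu]; exact hwlt
    rcases lex_master u hwlt' (le_of_lt hblen) with h | hpre
    · exact h
    · -- b <+: u : border situation, contradiction with minimality of v
      exfalso
      obtain ⟨m, hm⟩ := hpre
      have hmne : m ≠ [] := by
        rintro rfl
        exact hbu (by simpa using hm)
      have hmvS : m ++ v ∈ S := by
        refine ⟨⟨b, by rw [← hu, ← hm]; simp⟩, by simp [hmne], ?_⟩
        intro h
        have h1 : m.length + v.length = w.length := by simpa using congrArg List.length h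
        have h2 : u.length + v.length = w.length := by simpa using congrArg List.length hu
        have h3 : b.length + m.length = u.length := by simpa using congrArg List.length hm
        have hbl : 0 < b.length := List.length_pos_iff.mpr hbne
        omega
      have h5 : (v:List X) < m ++ v := by
        refine lt_of_le_of_ne (hvmin _ hmvS) ?_
        intro h
        have h0 : v.length = m.length + v.length := by simpa using congrArg List.length h
        exact hmne (List.length_eq_zero_iff.mp (by omega))
      have h6 : List.Lex (· < ·) (b ++ (m ++ v)) (b ++ v) := by
        rw [← List.append_assoc, hm, hu]
        exact hwlt
      have h7 : List.Lex (· < ·) (m ++ v) v := lex_strip b h6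
      exact lt_asymm h5 (show (m++v : List X) < v from h7)
  exact ⟨u, v, hune, hvne, huL, hvL, hu.symm⟩

end LyndonAux

open LyndonAux in
theorem stmt10 {X : Type*} [LinearOrder X] [Finite X]
    (N : Set (List X)) (hN : IsLyndonSystem N)
    (hfin : N.Finite) (d : ℕ) (hd : N.ncard = d) :
    d - 1 ≤ (WSet N).ncard := by
  classical
  subst hd
  rcases le_or_gt N.ncard 1 with hcard | hcard
  · omega
  have hNne : N.Nonempty := Set.nonempty_of_ncard_ne_zero (by omega)
  -- a length bound for N
  obtain ⟨M, hM⟩ : ∃ M, ∀ n ∈ N, n.length ≤ M := by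
    obtain ⟨M, hM⟩ := (hfin.image List.length).bddAbove
    exact ⟨M, fun n hn => hM (Set.mem_image_of_mem _ hn)⟩
  -- W is finite
  have hWfin : (WSet N).Finite := by
    apply (List.finite_length_le X (2 * M)).subset
    intro w hw
    obtain ⟨hwL, hwN, hwfac⟩ := hw
    simp only [Set.mem_setOf_eq]
    rcases lt_or_ge w.length 2 with hlen | hlen
    · exfalso
      have h1 : 0 < w.length := List.length_pos_iff.mpr hwL.1
      have : w.length = 1 := by omega
      obtain ⟨x, hx⟩ := List.length_eq_one_iff.mp this
      exact hwN (hx ▸ hN.2.1 x)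
    · obtain ⟨u, v, hune, hvne, huL, hvL, huv⟩ := lyndon_factorization hwL hlen
      have huw : u ∈ N := by
        apply hwfac u huL
        · exact (huv ▸ List.prefix_append u v).isInfix
        · intro h
          rw [h] at huv
          have h0 : w.length = w.length + v.length := by simpa using congrArg List.length huv
          exact hvne (List.length_eq_zero_iff.mp (by omega))
      have hvw : v ∈ N := by
        apply hwfac v hvL
        · exact (huv ▸ List.suffix_append u v).isInfix
        · intro h
          rw [h] at huv
          have h0 : w.length = u.length + w.length := by simpa using congrArg List.length huv
          exact hune (List.length_eq_zero_iff.mp (by omega))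
      have hu1 := hM u huw
      have hv1 := hM v hvw
      have h0 : w.length = u.length + v.length := by simpa using congrArg List.length huv
      omega
  -- maximal element of N
  obtain ⟨g, hgN, hgmax⟩ := Set.exists_max_image N id hfin hNne
  -- the key existence statement
  have key : ∀ w ∈ N \ {g}, ∃ z, z ∈ WSet N ∧ w < z ∧ ∀ v' ∈ N, w < v' → z < v' := by
    rintro w ⟨hwN, hwg⟩
    have hwL : IsLyndon w := hN.1 w hwN
    have hwgne : w ≠ g := hwg
    have hwltg : w < g := lt_of_le_of_ne (hgmax w hwN) hwgne
    -- minimal element of N above w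
    set T : Set (List X) := {v | v ∈ N ∧ w < v} with hT
    have hTfin : T.Finite := hfin.subset (fun v hv => hv.1)
    have hTne : T.Nonempty := ⟨g, hgN, hwltg⟩
    obtain ⟨v, hvT, hvmin⟩ := Set.exists_min_image T id hTfin hTne
    obtain ⟨hvN, hwv⟩ := hvT
    have hvL : IsLyndon v := hN.1 v hvN
    have hwvL : IsLyndon (w ++ v) := lyndon_append hwL hvL hwv
    have hwvlt : List.Lex (· < ·) (w ++ v) v := lyndon_append_lex hvL hwv hwL.1
    have hwvN : w ++ v ∉ N := by
      intro h
      have h1 : w ++ v ∈ T := ⟨h, prefix_lex (List.prefix_append w v)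
        (by
          intro he
          have h0 : w.length = w.length + v.length := by
            simpa using congrArg List.length he.symm
          exact hvL.1 (List.length_eq_zero_iff.mp (by omega)))⟩
      exact absurd (lt_of_le_of_lt (hvmin _ h1) (show (w++v:List X) < v from hwvlt))
        (lt_irrefl _)
    obtain ⟨z, hzW, hzinf⟩ := exists_wset_factor hN (w ++ v) hwvL hwvN
    have hzL := hzW.1
    have hzN := hzW.2.1
    refine ⟨z, hzW, ?_, ?_⟩
    · -- w < z
      rcases infix_split hzinf with h | h | ⟨s, p, hsne, hpne, hsw, hpv, hzsp⟩
      · exact absurd (hN.2.2 w hwN z hzL h) hzN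
      · exact absurd (hN.2.2 v hvN z hzL h) hzN
      · rcases eq_or_ne s w with rfl | hsnw
        · refine prefix_lex ⟨p, hzsp.symm⟩ ?_
          intro he
          have h0 : s.length = s.length + p.length := by
            rw [he] at hzsp; simpa using congrArg List.length hzsp
          exact hpne (List.length_eq_zero_iff.mp (by omega))
        · have h1 : List.Lex (· < ·) w s := lyndon_lt_suffix_s10 hwL hsw hsne hsnw
          rw [hzsp]
          exact List.Lex.append_right _ p h1
    · -- z < every element of N above w
      intro v' hv' hwv'
      have hvv' : (v:List X) ≤ v' := hvmin v' ⟨hv', hwv'⟩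
      have hzv : (z:List X) < v := by
        rcases infix_split hzinf with h | h | ⟨s, p, hsne, hpne, hsw, hpv, hzsp⟩
        · exact absurd (hN.2.2 w hwN z hzL h) hzN
        · exact absurd (hN.2.2 v hvN z hzL h) hzN
        · have hpz : p <:+ z := hzsp ▸ List.suffix_append s p
          have hpnz : p ≠ z := by
            intro h
            rw [hzsp] at h
            have h0 : p.length = s.length + p.length := by
              simpa using congrArg List.length h
            exact hsne (List.length_eq_zero_iff.mp (by omega))
          have h1 : List.Lex (· < ·) z p := lyndon_lt_suffix_s10 hzL hpz hpne hpnz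
          obtain ⟨r, hr⟩ := hpv
          rw [← hr]
          exact List.Lex.append_right _ r h1
      exact lt_of_lt_of_le hzv hvv'
  -- build the injection
  choose! f hf1 hf2 hf3 using key
  have hmaps : ∀ w ∈ N \ {g}, f w ∈ WSet N := fun w hw => hf1 w hw
  have hinj : Set.InjOn f (N \ {g}) := by
    rintro w1 hw1 w2 hw2 hfe
    by_contra hne
    rcases lt_or_gt_of_ne hne with h | h
    · have h1 : f w1 < w2 := hf3 w1 hw1 w2 hw2.1 h
      have h2 : w2 < f w2 := hf2 w2 hw2
      rw [← hfe] at h2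
      exact lt_asymm h1 h2
    · have h1 : f w2 < w1 := hf3 w2 hw2 w1 hw1.1 h
      have h2 : w1 < f w1 := hf2 w1 hw1
      rw [hfe] at h2
      exact lt_asymm h1 h2
  have hle : (N \ {g}).ncard ≤ (WSet N).ncard :=
    Set.ncard_le_ncard_of_injOn f hmaps hinj hWfin
  have hdiff : (N \ {g}).ncard = N.ncard - 1 :=
    Set.ncard_diff_singleton_of_mem hgN
  omega
end

section
/- Let ω be a Lyndon word with ω = uv where u and v are Lyndon words, and let f, g be elements of the free associative algebra over a field whose leading monomials (with respect to the degree-lexicographic order extending the reversed alphabet order) are u and v respectively, with f, g monic. Then the commutator [f, g] = fg − gf is monic with leading monomial uv. -/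
/-- The degree-lexicographic order on words (extending the *reversed* alphabet
order): `u ≺ v` iff `|u| < |v|`, or `|u| = |v|` and `v` is lexicographically
smaller than `u`. -/
def DegLexLt {X : Type*} [LinearOrder X] (u v : List X) : Prop :=
  u.length < v.length ∨ (u.length = v.length ∧ List.Lex (· < ·) v u)

/-- `f` is monic with leading monomial `u` (w.r.t. the deg-lex order): the
coefficient of `u` in `f` is `1` and every other monomial of `f` is
deg-lex smaller than `u`. -/
def IsMonicWithLM {K X : Type*} [Field K] [LinearOrder X]
    (f : MonoidAlgebra K (FreeMonoid X)) (u : List X) : Prop :=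
  f.coeff (FreeMonoid.ofList u) = 1 ∧
    ∀ w ∈ f.coeff.support, FreeMonoid.toList w ≠ u → DegLexLt (FreeMonoid.toList w) u

section lex
variable {X : Type*} [LinearOrder X]

lemma lex_irrefl (a : List X) : ¬ List.Lex (· < ·) a a :=
  irrefl_of (List.Lex (· < ·)) a

lemma lex_trans {a b c : List X} (h1 : List.Lex (· < ·) a b)
    (h2 : List.Lex (· < ·) b c) : List.Lex (· < ·) a c :=
  List.lex_trans (fun h1 h2 => lt_trans h1 h2) h1 h2

lemma lex_append_left {a : List X} {c d : List X} (h : List.Lex (· < ·) c d) :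
    List.Lex (· < ·) (a ++ c) (a ++ d) := by
  induction a with
  | nil => simpa
  | cons x xs ih => exact List.Lex.cons ih

lemma lex_append_both {a b : List X} (h : List.Lex (· < ·) a b)
    (hlen : a.length = b.length) (c d : List X) :
    List.Lex (· < ·) (a ++ c) (b ++ d) := by
  induction h with
  | nil => simp at hlen
  | @cons x l₁ l₂ h ih =>
      exact List.Lex.cons (ih (by simpa using hlen))
  | rel h => exact List.Lex.rel h

/-- nonstrict deglex -/
def DLe (a b : List X) : Prop := a = b ∨ DegLexLt a b

lemma DLe_len {a b : List X} (h : DLe a b) : a.length ≤ b.length := by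
  rcases h with rfl | h | ⟨h, _⟩ <;> omega

lemma deglex_irrefl (a : List X) : ¬ DegLexLt a a := by
  rintro (h | ⟨-, h⟩); · omega
  · exact lex_irrefl a h

lemma deglex_mul_left {w1 u w2 v : List X} (h1 : DegLexLt w1 u) (h2 : DLe w2 v) :
    DegLexLt (w1 ++ w2) (u ++ v) := by
  have hl2 : w2.length ≤ v.length := DLe_len h2
  rcases h1 with h1 | ⟨he, hlex⟩
  · left; simp only [List.length_append]; omega
  · rcases lt_or_eq_of_le hl2 with h | h
    · left; simp only [List.length_append]; omega
    · right
      refine ⟨by simp [List.length_append, he, h], ?_⟩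
      exact lex_append_both hlex he.symm v w2

lemma deglex_mul_right {w1 u w2 v : List X} (h1 : DLe w1 u) (h2 : DegLexLt w2 v) :
    DegLexLt (w1 ++ w2) (u ++ v) := by
  rcases h1 with rfl | h1
  · rcases h2 with h2 | ⟨he, hlex⟩
    · left; simp only [List.length_append]; omega
    · right
      exact ⟨by simp [List.length_append, he], lex_append_left hlex⟩
  · exact deglex_mul_left h1 (Or.inr h2)

lemma deglex_mul {w1 u w2 v : List X} (h1 : DLe w1 u) (h2 : DLe w2 v) :
    DLe (w1 ++ w2) (u ++ v) := by
  rcases h1 with rfl | h1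
  · rcases h2 with rfl | h2
    · exact Or.inl rfl
    · exact Or.inr (deglex_mul_right (Or.inl rfl) h2)
  · exact Or.inr (deglex_mul_left h1 h2)

/-- uniqueness of the top factorization -/
lemma factor_unique {w1 u w2 v : List X} (h1 : DLe w1 u) (h2 : DLe w2 v)
    (h : w1 ++ w2 = u ++ v) : w1 = u ∧ w2 = v := by
  by_contra hc
  have : DegLexLt (w1 ++ w2) (u ++ v) := by
    rcases h1 with rfl | h1
    · rcases h2 with rfl | h2
      · exact absurd ⟨rfl, rfl⟩ hc
      · exact deglex_mul_right (Or.inl rfl) h2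
    · exact deglex_mul_left h1 h2
  rw [h] at this
  exact deglex_irrefl _ this

/-- the swapped factorization cannot reach the top -/
lemma factor_swap {w1 u w2 v : List X} (h1 : DLe w1 u) (h2 : DLe w2 v)
    (hlyn : List.Lex (· < ·) (u ++ v) (v ++ u))
    (h : w2 ++ w1 = u ++ v) : False := by
  have hlen : w1.length = u.length ∧ w2.length = v.length := by
    have l1 := DLe_len h1
    have l2 := DLe_len h2
    have := congrArg List.length h
    simp only [List.length_append] at this
    omega
  have hkey : List.Lex (· < ·) (v ++ u) (w2 ++ w1) ∨ (v ++ u) = w2 ++ w1 := by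
    rcases h2 with rfl | h2 | ⟨-, hlex2⟩
    · rcases h1 with rfl | h1 | ⟨-, hlex1⟩
      · exact Or.inr rfl
      · omega
      · exact Or.inl (lex_append_left hlex1)
    · omega
    · exact Or.inl (lex_append_both hlex2 hlen.2.symm u w1)
  rcases hkey with hk | hk
  · rw [h] at hk
    exact lex_irrefl _ (lex_trans hlyn hk)
  · rw [h] at hk
    exact lex_irrefl _ (hk ▸ hlyn)

end lex

theorem stmt18 {K X : Type*} [Field K] [LinearOrder X]
    (u v : List X) (hu : IsLyndon u) (hv : IsLyndon v) (huv : IsLyndon (u ++ v))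
    (f g : MonoidAlgebra K (FreeMonoid X))
    (hf : IsMonicWithLM f u) (hg : IsMonicWithLM g v) :
    IsMonicWithLM (f * g - g * f) (u ++ v) := by
  classical
  obtain ⟨hf1, hf2⟩ := hf
  obtain ⟨hg1, hg2⟩ := hg
  have hlyn : List.Lex (· < ·) (u ++ v) (v ++ u) := huv.2 u v hu.1 hv.1 rfl
  -- support bounds as DLe
  have hfle : ∀ w ∈ f.coeff.support, DLe (FreeMonoid.toList w) u := by
    intro w hw
    by_cases h : FreeMonoid.toList w = u
    · exact Or.inl h
    · exact Or.inr (hf2 w hw h)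
  have hgle : ∀ w ∈ g.coeff.support, DLe (FreeMonoid.toList w) v := by
    intro w hw
    by_cases h : FreeMonoid.toList w = v
    · exact Or.inl h
    · exact Or.inr (hg2 w hw h)
  have hmemf : FreeMonoid.ofList u ∈ f.coeff.support := by
    rw [Finsupp.mem_support_iff, hf1]; exact one_ne_zero
  have hmemg : FreeMonoid.ofList v ∈ g.coeff.support := by
    rw [Finsupp.mem_support_iff, hg1]; exact one_ne_zero
  have toList_inj : Function.Injective (FreeMonoid.toList (α := X)) :=
    fun a b h => by simpa using congrArg FreeMonoid.ofList h
  -- coefficient of uv in f*g is 1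
  have hfg : (f * g).coeff (FreeMonoid.ofList (u ++ v)) = 1 := by
    rw [MonoidAlgebra.coeff_mul]
    rw [Finsupp.sum]
    rw [Finset.sum_eq_single_of_mem (FreeMonoid.ofList u) hmemf]
    · rw [Finsupp.sum]
      rw [Finset.sum_eq_single_of_mem (FreeMonoid.ofList v) hmemg]
      · rw [if_pos (by rw [← FreeMonoid.ofList_append]), hf1, hg1, one_mul]
      · intro b hb hbne
        rw [if_neg]
        intro hcon
        apply hbne
        have := factor_unique (w1 := u) (u := u) (Or.inl rfl) (hgle b hb)
          (by simpa using congrArg FreeMonoid.toList hcon)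
        exact toList_inj (by simpa using this.2)
    · intro b hb hbne
      apply Finset.sum_eq_zero
      intro c hc
      dsimp only
      rw [if_neg]
      intro hcon
      apply hbne
      have := factor_unique (hfle b hb) (hgle c hc)
        (by simpa using congrArg FreeMonoid.toList hcon)
      exact toList_inj (by simpa using this.1)
  -- coefficient of uv in g*f is 0
  have hgf : (g * f).coeff (FreeMonoid.ofList (u ++ v)) = 0 := by
    rw [MonoidAlgebra.coeff_mul]
    rw [Finsupp.sum]
    apply Finset.sum_eq_zero
    intro b hb
    rw [Finsupp.sum]
    apply Finset.sum_eq_zero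
    intro c hc
    rw [if_neg]
    intro hcon
    exact factor_swap (hfle c hc) (hgle b hb) hlyn
      (by simpa using congrArg FreeMonoid.toList hcon)
  constructor
  · rw [MonoidAlgebra.coeff_sub, Finsupp.sub_apply, hfg, hgf, sub_zero]
  · intro w hw hwne
    have hw' : w ∈ (f * g).coeff.support ∪ (g * f).coeff.support :=
      Finsupp.support_sub hw
    have : ∃ a ∈ f.coeff.support, ∃ b ∈ g.coeff.support, w = a * b ∨ w = b * a := by
      rcases Finset.mem_union.1 hw' with h | h
      · obtain ⟨a, ha, b, hb, hab⟩ := Finset.mem_mul.1 (MonoidAlgebra.support_coeff_mul_subset f g h)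
        exact ⟨a, ha, b, hb, Or.inl hab.symm⟩
      · obtain ⟨b, hb, a, ha, hab⟩ := Finset.mem_mul.1 (MonoidAlgebra.support_coeff_mul_subset g f h)
        exact ⟨a, ha, b, hb, Or.inr hab.symm⟩
    obtain ⟨a, ha, b, hb, hab⟩ := this
    rcases hab with rfl | rfl
    · have := deglex_mul (hfle a ha) (hgle b hb)
      rcases this with h | h
      · exact absurd (by simpa using h) hwne
      · simpa using h
    · -- w = b * a, toList w = toList b ++ toList a
      have h1 := hfle a ha
      have h2 := hgle b hb
      have hle : DLe (FreeMonoid.toList b ++ FreeMonoid.toList a)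
          (v ++ u) := deglex_mul h2 h1
      have hvu : DegLexLt (v ++ u) (u ++ v) := by
        right
        exact ⟨by simp [List.length_append]; omega, hlyn⟩
      rcases hle with h | h
      · rw [show FreeMonoid.toList (b * a) = FreeMonoid.toList b ++ FreeMonoid.toList a from rfl, h]
        exact hvu
      · rw [show FreeMonoid.toList (b * a) = FreeMonoid.toList b ++ FreeMonoid.toList a from rfl]
        -- transitivity of DegLexLt
        rcases h with h | ⟨he, hlex⟩ <;> rcases hvu with h' | ⟨he', hlex'⟩
        · left; omega
        · left; omega
        · left; omega
        · right; exact ⟨by omega, lex_trans hlex' hlex⟩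
end
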